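/- arXiv:2510.05642 — 6 statements merged into one kernel-verified Lean document; each statement's English description precedes it below -/
import Mathlib

section
/- Suppose the drift satisfies ∑_{i=-l}^{l} i·p(i) > 0 and that γ ∈ (0,1) satisfies f(γ) = 0. Then for every positive integer ξ, the probability that the walk ever reaches level −ξ or below satisfies ℙ(∃ n ≥ 1, X_n ≤ −ξ) ≤ 1/(γ^{−ξ−1} − γ^{−1} + 1). -/
/-!
The potential `V x = γ ^ x / (1 - γ) - min 1 (γ ^ x)` decreases by between `γ ^ (x + 1)` and
`γ ^ x` from `x` to `x + 1`. Telescoping these bounds over a jump and using `f γ = 0` shows that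
`V` is excessive for the walk: `𝔼 V (x + s) ≤ V x` for a step `s` of law `p`. Hence `𝔼 V` does not
increase along the walk stopped on entering `(-∞, -ξ]`, so, `V` being positive and decreasing,
Markov's inequality bounds the probability that the stopped walk lies in `(-∞, -ξ]` by
`V 0 / V (-ξ)`, which is the stated bound.
-/

open MeasureTheory ProbabilityTheory Finset
open scoped ENNReal

theorem sum_Icc_neg_eq_add_sum_pos_add_sum_neg {M : Type*} [AddCommMonoid M] (l : ℕ)
    (h : ℤ → M) :
    ∑ i ∈ Icc (-(l : ℤ)) l, h i = h 0 + ∑ i ∈ Icc 1 l, h i + ∑ i ∈ Icc 1 l, h (-(i : ℤ)) := by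
  induction l with
  | zero => simp
  | succ n ih =>
    have hIcc : Icc (-((n + 1 : ℕ) : ℤ)) ((n + 1 : ℕ) : ℤ)
        = insert (-((n + 1 : ℕ) : ℤ)) (insert ((n + 1 : ℕ) : ℤ) (Icc (-(n : ℤ)) n)) := by
      ext a
      simp only [mem_Icc, mem_insert]
      omega
    rw [hIcc, sum_insert (by simp only [mem_insert, mem_Icc]; omega),
      sum_insert (by simp only [mem_Icc]; omega), ih, sum_Icc_succ_top (by omega : 1 ≤ n + 1),
      sum_Icc_succ_top (by omega : 1 ≤ n + 1)]
    abel

section Potential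

variable {γ : ℝ}

section Telescoping

variable {V : ℤ → ℝ} (hγ : γ ≠ 0)
include hγ

theorem mul_sum_Icc_pow_le_sub_of_sub_succ (hV : ∀ y, γ ^ (y + 1) ≤ V y - V (y + 1)) (x : ℤ)
    (i : ℕ) :
    γ ^ x * ∑ j ∈ Icc 1 i, γ ^ j ≤ V x - V (x + i) := by
  induction i with
  | zero => simp
  | succ n ih =>
    have hstep := hV (x + n)
    rw [sum_Icc_succ_top (by omega), mul_add, ← zpow_natCast, ← zpow_add₀ hγ]
    push_cast at hstep ⊢
    rw [← add_assoc]
    linarith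

theorem sub_le_mul_sum_Icc_zpow_neg_of_sub_succ (hV : ∀ y, V y - V (y + 1) ≤ γ ^ y) (x : ℤ)
    (i : ℕ) :
    V (x - i) - V x ≤ γ ^ x * ∑ j ∈ Icc 1 i, γ ^ (-(j : ℤ)) := by
  induction i with
  | zero => simp
  | succ n ih =>
    have hstep := hV (x - (n + 1))
    rw [show x - (n + 1) + 1 = x - n by ring] at hstep
    rw [sum_Icc_succ_top (by omega), mul_add, ← zpow_add₀ hγ]
    push_cast
    rw [← sub_eq_add_neg]
    linarith

end Telescoping

theorem sum_comp_add_mul_le_of_sub_succ {V : ℤ → ℝ} (hγ : γ ≠ 0)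
    (hlo : ∀ y, γ ^ (y + 1) ≤ V y - V (y + 1)) (hhi : ∀ y, V y - V (y + 1) ≤ γ ^ y)
    {l : ℕ} {p : ℤ → ℝ} (hp_nonneg : ∀ i, 0 ≤ p i) (hp_sum : ∑ i ∈ Icc (-(l : ℤ)) l, p i = 1)
    (hroot : ∑ i ∈ Icc 1 l, (∑ j ∈ Icc 1 i, γ ^ j) * p i
      = ∑ i ∈ Icc 1 l, (∑ j ∈ Icc 1 i, γ ^ (-(j : ℤ))) * p (-(i : ℤ))) (x : ℤ) :
    ∑ i ∈ Icc (-(l : ℤ)) l, V (x + i) * p i ≤ V x := by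
  have hup (i : ℕ) : V (x + i) * p i ≤ (V x - γ ^ x * ∑ j ∈ Icc 1 i, γ ^ j) * p i :=
    mul_le_mul_of_nonneg_right (by linarith [mul_sum_Icc_pow_le_sub_of_sub_succ hγ hlo x i])
      (hp_nonneg _)
  have hdown (i : ℕ) : V (x + -(i : ℤ)) * p (-(i : ℤ))
      ≤ (V x + γ ^ x * ∑ j ∈ Icc 1 i, γ ^ (-(j : ℤ))) * p (-(i : ℤ)) :=
    mul_le_mul_of_nonneg_right
      (by linarith [sub_eq_add_neg x i ▸ sub_le_mul_sum_Icc_zpow_neg_of_sub_succ hγ hhi x i])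
      (hp_nonneg _)
  rw [sum_Icc_neg_eq_add_sum_pos_add_sum_neg] at hp_sum
  calc ∑ i ∈ Icc (-(l : ℤ)) l, V (x + i) * p i
      ≤ V x * p 0 + ∑ i ∈ Icc 1 l, (V x - γ ^ x * ∑ j ∈ Icc 1 i, γ ^ j) * p i
        + ∑ i ∈ Icc 1 l, (V x + γ ^ x * ∑ j ∈ Icc 1 i, γ ^ (-(j : ℤ))) * p (-(i : ℤ)) := by
        rw [sum_Icc_neg_eq_add_sum_pos_add_sum_neg, add_zero]
        exact add_le_add (add_le_add_right (sum_le_sum fun i _ => hup i) _)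
          (sum_le_sum fun i _ => hdown i)
    _ = V x * (p 0 + ∑ i ∈ Icc 1 l, p i + ∑ i ∈ Icc 1 l, p (-(i : ℤ)))
        - γ ^ x * (∑ i ∈ Icc 1 l, (∑ j ∈ Icc 1 i, γ ^ j) * p i
          - ∑ i ∈ Icc 1 l, (∑ j ∈ Icc 1 i, γ ^ (-(j : ℤ))) * p (-(i : ℤ))) := by
        simp only [sub_mul, add_mul, sum_sub_distrib, sum_add_distrib, ← mul_sum, mul_assoc]
        ring
    _ = V x := by rw [hp_sum, hroot, sub_self, mul_zero, mul_one, sub_zero]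

/-- Its decrements are the extremes allowed by `sum_comp_add_mul_le_of_sub_succ`, `γ ^ x` below `0`
and `γ ^ (x + 1)` from `0` on, which makes `hittingPotential γ c / hittingPotential γ 0` largest
for `c < 0`. -/
noncomputable def hittingPotential (γ : ℝ) (x : ℤ) : ℝ :=
  γ ^ x / (1 - γ) - min 1 (γ ^ x)

section HittingPotential

variable (hγ0 : 0 < γ) (hγ1 : γ < 1)
include hγ0 hγ1

theorem hittingPotential_sub_succ_mem_Icc (x : ℤ) :
    hittingPotential γ x - hittingPotential γ (x + 1) ∈ Set.Icc (γ ^ (x + 1)) (γ ^ x) := by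
  have hsucc : γ ^ (x + 1) = γ ^ x * γ := zpow_add_one₀ hγ0.ne' x
  have hpos : 0 < γ ^ x := zpow_pos hγ0 x
  have hlt : γ ^ (x + 1) < γ ^ x := by rw [hsucc]; exact mul_lt_of_lt_one_right hpos hγ1
  have hdiff : hittingPotential γ x - hittingPotential γ (x + 1)
      = γ ^ x - (min 1 (γ ^ x) - min 1 (γ ^ (x + 1))) := by
    have : 1 - γ ≠ 0 := by linarith
    simp only [hittingPotential, hsucc]
    field_simp
    ring
  have hmin_mono : min 1 (γ ^ (x + 1)) ≤ min 1 (γ ^ x) := min_le_min_left _ hlt.le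
  have hmin_lip : min 1 (γ ^ x) - min 1 (γ ^ (x + 1)) ≤ γ ^ x - γ ^ (x + 1) := by
    simp only [min_def]
    split_ifs <;> linarith
  constructor <;> linarith

theorem hittingPotential_pos (x : ℤ) : 0 < hittingPotential γ x := by
  have hpos : 0 < γ ^ x := zpow_pos hγ0 x
  have : γ ^ x < γ ^ x / (1 - γ) := by
    rw [lt_div_iff₀ (by linarith)]
    nlinarith
  unfold hittingPotential
  linarith [min_le_right 1 (γ ^ x)]

theorem antitone_hittingPotential : Antitone (hittingPotential γ) :=
  antitone_int_of_succ_le fun x => by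
    linarith [(hittingPotential_sub_succ_mem_Icc hγ0 hγ1 x).1, zpow_pos hγ0 (x + 1)]

theorem hittingPotential_zero_div_neg_natCast (ξ : ℕ) :
    hittingPotential γ 0 / hittingPotential γ (-(ξ : ℤ))
      = 1 / (γ ^ (-(ξ : ℤ) - 1) - γ⁻¹ + 1) := by
  have hone : 1 ≤ γ ^ (-(ξ : ℤ)) := one_le_zpow_of_nonpos₀ hγ0 hγ1.le (by omega)
  have hsub : γ ^ (-(ξ : ℤ) - 1) = γ ^ (-(ξ : ℤ)) / γ := zpow_sub_one₀ hγ0.ne' _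
  have h1 : 1 - γ ≠ 0 := by linarith
  simp only [hittingPotential, zpow_zero, min_self, min_eq_left hone, hsub]
  generalize γ ^ (-(ξ : ℤ)) = u at hone ⊢
  have hnum : 1 / (1 - γ) - 1 = γ / (1 - γ) := by field_simp; ring
  have hden : u / (1 - γ) - 1 = (u - 1 + γ) / (1 - γ) := by field_simp; ring
  have hrhs : u / γ - γ⁻¹ + 1 = (u - 1 + γ) / γ := by field_simp
  rw [hnum, hden, hrhs, div_div_div_cancel_right₀ h1, one_div_div]

end HittingPotential

end Potential

section IndepFun

variable {Ω α β : Type*} [MeasurableSpace Ω] [MeasurableSpace α] [MeasurableSpace β]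

theorem lintegral_comp_le_of_indepFun {μ : Measure Ω} [IsFiniteMeasure μ] {Y : Ω → α}
    {Z : Ω → β} (hYZ : IndepFun Y Z μ) (hY : Measurable Y) (hZ : Measurable Z) {T : α → β → α}
    (hT : Measurable (Function.uncurry T)) {W : α → ℝ≥0∞} (hW : Measurable W)
    (hWT : ∀ y, ∫⁻ z, W (T y z) ∂(μ.map Z) ≤ W y) :
    ∫⁻ ω, W (T (Y ω) (Z ω)) ∂μ ≤ ∫⁻ ω, W (Y ω) ∂μ := by
  have hWT_meas : Measurable fun q : α × β => W (T q.1 q.2) := hW.comp hT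
  calc ∫⁻ ω, W (T (Y ω) (Z ω)) ∂μ = ∫⁻ q, W (T q.1 q.2) ∂(μ.map fun ω => (Y ω, Z ω)) :=
        (lintegral_map hWT_meas (hY.prodMk hZ)).symm
    _ = ∫⁻ y, ∫⁻ z, W (T y z) ∂(μ.map Z) ∂(μ.map Y) := by
        rw [(indepFun_iff_map_prod_eq_prod_map_map hY.aemeasurable hZ.aemeasurable).1 hYZ,
          lintegral_prod _ hWT_meas.aemeasurable]
    _ ≤ ∫⁻ y, W y ∂(μ.map Y) := lintegral_mono hWT
    _ = ∫⁻ ω, W (Y ω) ∂μ := lintegral_map hW hY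

end IndepFun

section DrivenChain

variable {Ω α β : Type*} [MeasurableSpace α] [mβ : MeasurableSpace β]

def drivenChain (T : α → β → α) (y₀ : α) (Z : ℕ → Ω → β) : ℕ → Ω → α
  | 0 => fun _ => y₀
  | k + 1 => fun ω => T (drivenChain T y₀ Z k ω) (Z k ω)

variable {T : α → β → α} (hT : Measurable (Function.uncurry T)) (y₀ : α) {Z : ℕ → Ω → β}
include hT

theorem measurable_drivenChain_iSup_comap (k : ℕ) :
    Measurable[⨆ j ∈ Set.Iio k, mβ.comap (Z j)] (drivenChain T y₀ Z k) := by
  induction k with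
  | zero => exact measurable_const
  | succ k ih =>
    have hprev : Measurable[⨆ j ∈ Set.Iio (k + 1), mβ.comap (Z j)]
        (drivenChain T y₀ Z k) :=
      ih.mono (biSup_mono fun j (hj : j < k) => (lt_trans hj (Nat.lt_succ_self k) :)) le_rfl
    have hnoise : Measurable[⨆ j ∈ Set.Iio (k + 1), mβ.comap (Z j)] (Z k) :=
      (comap_measurable (Z k)).mono (le_iSup₂ (f := fun j (_ : j ∈ Set.Iio (k + 1)) =>
        mβ.comap (Z j)) k (Nat.lt_succ_self k)) le_rfl
    exact hT.comp (hprev.prodMk hnoise)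

variable [MeasurableSpace Ω] (hZ : ∀ k, Measurable (Z k))
include hZ

theorem measurable_drivenChain (k : ℕ) : Measurable (drivenChain T y₀ Z k) :=
  (measurable_drivenChain_iSup_comap hT y₀ k).mono (iSup₂_le fun j _ => (hZ j).comap_le) le_rfl

theorem indepFun_drivenChain {μ : Measure Ω} (hind : iIndepFun Z μ) (k : ℕ) :
    IndepFun (drivenChain T y₀ Z k) (Z k) μ := by
  rw [IndepFun_iff_Indep]
  refine indep_of_indep_of_le (indep_iSup_of_disjoint (fun j => (hZ j).comap_le) hind.iIndep
    (S := Set.Iio k) (T := {k}) (by simp)) (measurable_drivenChain_iSup_comap hT y₀ k).comap_le ?_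
  exact le_iSup₂ (f := fun j (_ : j ∈ ({k} : Set ℕ)) => mβ.comap (Z j)) k rfl

theorem lintegral_drivenChain_le {μ : Measure Ω} [IsProbabilityMeasure μ] (hind : iIndepFun Z μ)
    {W : α → ℝ≥0∞} (hW : Measurable W) (hWT : ∀ k y, ∫⁻ z, W (T y z) ∂(μ.map (Z k)) ≤ W y)
    (n : ℕ) : ∫⁻ ω, W (drivenChain T y₀ Z n ω) ∂μ ≤ W y₀ := by
  induction n with
  | zero => simp [drivenChain]
  | succ n ih =>
    exact (lintegral_comp_le_of_indepFun (indepFun_drivenChain hT y₀ hZ hind n)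
      (measurable_drivenChain hT y₀ hZ n) (hZ n) hT hW (hWT n)).trans ih

end DrivenChain

theorem lintegral_ofReal_eq_sum {α : Type*} [MeasurableSpace α] [Countable α]
    [MeasurableSingletonClass α] {ν : Measure α} {p : α → ℝ} (hp_nonneg : ∀ i, 0 ≤ p i)
    {s : Finset α} (hp_supp : ∀ i ∉ s, p i = 0) (hν : ∀ i, ν {i} = ENNReal.ofReal (p i))
    {g : α → ℝ} (hg : ∀ i, 0 ≤ g i) :
    ∫⁻ i, ENNReal.ofReal (g i) ∂ν = ENNReal.ofReal (∑ i ∈ s, g i * p i) := by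
  rw [lintegral_countable', tsum_eq_sum fun i hi => by rw [hν, hp_supp i hi, ENNReal.ofReal_zero,
    mul_zero], ENNReal.ofReal_sum_of_nonneg fun i _ => mul_nonneg (hg i) (hp_nonneg i)]
  exact sum_congr rfl fun i _ => by rw [hν, ENNReal.ofReal_mul (hg i)]

def stopStep (c y s : ℤ) : ℤ :=
  if y ≤ c then y else y + s

section StoppedWalk

variable {Ω : Type*} (c : ℤ) (step : ℕ → Ω → ℤ)

theorem drivenChain_stopStep_le_or_eq_sum (n : ℕ) (ω : Ω) :
    drivenChain (stopStep c) 0 step n ω ≤ c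
      ∨ drivenChain (stopStep c) 0 step n ω = ∑ k ∈ range n, step k ω := by
  induction n with
  | zero => simp [drivenChain]
  | succ n ih =>
    simp only [drivenChain, stopStep, sum_range_succ]
    split_ifs with h
    · exact Or.inl h
    · exact Or.inr (by rw [ih.resolve_left h])

theorem drivenChain_stopStep_succ_le {n : ℕ} {ω : Ω}
    (h : drivenChain (stopStep c) 0 step n ω ≤ c) :
    drivenChain (stopStep c) 0 step (n + 1) ω ≤ c := by
  simp [drivenChain, stopStep, h]

end StoppedWalk

theorem sum_hittingPotential_stopStep_le {γ : ℝ} (hγ0 : 0 < γ) (hγ1 : γ < 1) {l : ℕ} {p : ℤ → ℝ}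
    (hp_nonneg : ∀ i, 0 ≤ p i) (hp_sum : ∑ i ∈ Icc (-(l : ℤ)) l, p i = 1)
    (hroot : ∑ i ∈ Icc 1 l, (∑ j ∈ Icc 1 i, γ ^ j) * p i
      = ∑ i ∈ Icc 1 l, (∑ j ∈ Icc 1 i, γ ^ (-(j : ℤ))) * p (-(i : ℤ))) (c y : ℤ) :
    ∑ i ∈ Icc (-(l : ℤ)) l, hittingPotential γ (stopStep c y i) * p i ≤ hittingPotential γ y := by
  by_cases hy : y ≤ c
  · simp [stopStep, hy, ← mul_sum, hp_sum]
  · simp only [stopStep, hy, if_false]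
    exact sum_comp_add_mul_le_of_sub_succ hγ0.ne'
      (fun x => (hittingPotential_sub_succ_mem_Icc hγ0 hγ1 x).1)
      (fun x => (hittingPotential_sub_succ_mem_Icc hγ0 hγ1 x).2) hp_nonneg hp_sum hroot y

theorem measure_drivenChain_stopStep_le {Ω : Type*} [MeasurableSpace Ω] {μ : Measure Ω}
    [IsProbabilityMeasure μ] {γ : ℝ} (hγ0 : 0 < γ) (hγ1 : γ < 1) {l : ℕ} {p : ℤ → ℝ}
    (hp_nonneg : ∀ i, 0 ≤ p i) (hp_sum : ∑ i ∈ Icc (-(l : ℤ)) l, p i = 1)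
    (hp_supp : ∀ i : ℤ, (l : ℤ) < |i| → p i = 0)
    (hroot : ∑ i ∈ Icc 1 l, (∑ j ∈ Icc 1 i, γ ^ j) * p i
      = ∑ i ∈ Icc 1 l, (∑ j ∈ Icc 1 i, γ ^ (-(j : ℤ))) * p (-(i : ℤ)))
    {step : ℕ → Ω → ℤ} (hmeas : ∀ k, Measurable (step k)) (hindep : iIndepFun step μ)
    (hlaw : ∀ k i, μ {ω | step k ω = i} = ENNReal.ofReal (p i)) (c : ℤ) (n : ℕ) :
    μ {ω | drivenChain (stopStep c) 0 step n ω ≤ c}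
      ≤ ENNReal.ofReal (hittingPotential γ 0 / hittingPotential γ c) := by
  set V := hittingPotential γ
  set Y := drivenChain (stopStep c) 0 step
  have hT : Measurable (Function.uncurry (stopStep c)) := measurable_of_countable _
  have hV_meas : Measurable fun y => ENNReal.ofReal (V y) := measurable_of_countable _
  have hexcessive (k : ℕ) (y : ℤ) :
      ∫⁻ z, ENNReal.ofReal (V (stopStep c y z)) ∂(μ.map (step k)) ≤ ENNReal.ofReal (V y) := by
    rw [lintegral_ofReal_eq_sum hp_nonneg (s := Icc (-(l : ℤ)) l)
      (fun i hi => hp_supp i (by rw [mem_Icc] at hi; rw [lt_abs]; omega))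
      (fun i => by rw [Measure.map_apply (hmeas k) (measurableSet_singleton i)]; exact hlaw k i)
      (fun i => (hittingPotential_pos hγ0 hγ1 _).le)]
    exact ENNReal.ofReal_le_ofReal
      (sum_hittingPotential_stopStep_le hγ0 hγ1 hp_nonneg hp_sum hroot c y)
  have hVc_pos := hittingPotential_pos hγ0 hγ1 c
  rw [ENNReal.ofReal_div_of_pos hVc_pos, ENNReal.le_div_iff_mul_le
    (Or.inl (ENNReal.ofReal_pos.2 hVc_pos).ne') (Or.inl ENNReal.ofReal_ne_top), mul_comm]
  calc ENNReal.ofReal (V c) * μ {ω | Y n ω ≤ c}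
      ≤ ENNReal.ofReal (V c) * μ {ω | ENNReal.ofReal (V c) ≤ ENNReal.ofReal (V (Y n ω))} :=
        mul_le_mul_right (measure_mono fun ω (h : Y n ω ≤ c) =>
          ENNReal.ofReal_le_ofReal (antitone_hittingPotential hγ0 hγ1 h)) _
    _ ≤ ∫⁻ ω, ENNReal.ofReal (V (Y n ω)) ∂μ :=
        mul_meas_ge_le_lintegral₀
          (hV_meas.comp (measurable_drivenChain hT 0 hmeas n)).aemeasurable _
    _ ≤ ENNReal.ofReal (V 0) := lintegral_drivenChain_le hT 0 hmeas hindep hV_meas hexcessive n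

theorem random_walk_hitting_probability_bound_general
    {Ω : Type*} [MeasurableSpace Ω] (μ : Measure Ω) [IsProbabilityMeasure μ]
    (l : ℕ)
    (p : ℤ → ℝ)
    (hp_nonneg : ∀ i, 0 ≤ p i)
    (hp_sum : ∑ i ∈ Finset.Icc (-(l : ℤ)) (l : ℤ), p i = 1)
    (hp_supp : ∀ i : ℤ, (l : ℤ) < |i| → p i = 0)
    (step : ℕ → Ω → ℤ)
    (hmeas : ∀ k, Measurable (step k))
    (hindep : iIndepFun step μ)
    (hlaw : ∀ k i, μ {ω | step k ω = i} = ENNReal.ofReal (p i))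
    (X : ℕ → Ω → ℤ)
    (hX : ∀ n ω, X n ω = ∑ k ∈ Finset.range n, step k ω)
    (f : ℝ → ℝ)
    (hf : ∀ g : ℝ, 0 < g →
      f g = (∑ i ∈ Finset.Icc 1 l, (∑ j ∈ Finset.Icc 1 i, g ^ j) * p (i : ℤ))
          - (∑ i ∈ Finset.Icc 1 l, (∑ j ∈ Finset.Icc 1 i, g ^ (-(j : ℤ))) * p (-(i : ℤ))))
    (γ : ℝ) (hγ : γ ∈ Set.Ioo (0 : ℝ) 1) (hroot : f γ = 0)
    (ξ : ℕ) :
    μ {ω | ∃ n ≥ 1, X n ω ≤ -(ξ : ℤ)}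
      ≤ ENNReal.ofReal (1 / (γ ^ (-(ξ : ℤ) - 1) - γ⁻¹ + 1)) := by
  obtain ⟨hγ0, hγ1⟩ := hγ
  set Y := drivenChain (stopStep (-(ξ : ℤ))) 0 step
  have hroot' := sub_eq_zero.1 (hf γ hγ0 ▸ hroot)
  calc μ {ω | ∃ n ≥ 1, X n ω ≤ -(ξ : ℤ)}
      ≤ μ (⋃ n, {ω | Y n ω ≤ -(ξ : ℤ)}) := measure_mono fun ω ⟨n, _, hn⟩ => Set.mem_iUnion.2
        ⟨n, (drivenChain_stopStep_le_or_eq_sum _ step n ω).elim id fun h =>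
          (h.trans (hX n ω).symm).trans_le hn⟩
    _ = ⨆ n, μ {ω | Y n ω ≤ -(ξ : ℤ)} := Monotone.measure_iUnion
        (monotone_nat_of_le_succ fun n ω => drivenChain_stopStep_succ_le _ step)
    _ ≤ ENNReal.ofReal (hittingPotential γ 0 / hittingPotential γ (-(ξ : ℤ))) := iSup_le <|
        measure_drivenChain_stopStep_le hγ0 hγ1 hp_nonneg hp_sum hp_supp hroot' hmeas hindep hlaw _
    _ = ENNReal.ofReal (1 / (γ ^ (-(ξ : ℤ) - 1) - γ⁻¹ + 1)) := by
        rw [hittingPotential_zero_div_neg_natCast hγ0 hγ1]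

/-- **Hitting probability bound for a positively drifted random walk.**
Let `p` be a probability mass function on `ℤ` supported on `[-l, l]`, let `step k` be i.i.d.
steps with law `p`, and let `X n = step 0 + ⋯ + step (n-1)` be the associated random walk
started at `0`.  If the drift `∑ i, i * p i` is positive and `γ ∈ (0,1)` is a root of
`f(γ) = ∑_{i=1}^l (∑_{j=1}^i γ^j) p(i) − ∑_{i=1}^l (∑_{j=1}^i γ^{−j}) p(−i)`, then for every
positive integer `ξ`, the probability that the walk ever reaches level `−ξ` or below is at most
`1 / (γ^{−ξ−1} − γ^{−1} + 1)`. -/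
theorem random_walk_hitting_probability_bound
    {Ω : Type*} [MeasurableSpace Ω] (μ : Measure Ω) [IsProbabilityMeasure μ]
    (l : ℕ) (hl : 0 < l)
    (p : ℤ → ℝ)
    (hp_nonneg : ∀ i, 0 ≤ p i)
    (hp_sum : ∑ i ∈ Finset.Icc (-(l : ℤ)) (l : ℤ), p i = 1)
    (hp_supp : ∀ i : ℤ, (l : ℤ) < |i| → p i = 0)
    (step : ℕ → Ω → ℤ)
    (hmeas : ∀ k, Measurable (step k))
    (hindep : iIndepFun step μ)
    (hlaw : ∀ k i, μ {ω | step k ω = i} = ENNReal.ofReal (p i))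
    (X : ℕ → Ω → ℤ)
    (hX : ∀ n ω, X n ω = ∑ k ∈ Finset.range n, step k ω)
    (hdrift : 0 < ∑ i ∈ Finset.Icc (-(l : ℤ)) (l : ℤ), (i : ℝ) * p i)
    (f : ℝ → ℝ)
    (hf : ∀ g : ℝ, 0 < g →
      f g = (∑ i ∈ Finset.Icc 1 l, (∑ j ∈ Finset.Icc 1 i, g ^ j) * p (i : ℤ))
          - (∑ i ∈ Finset.Icc 1 l, (∑ j ∈ Finset.Icc 1 i, g ^ (-(j : ℤ))) * p (-(i : ℤ))))
    (γ : ℝ) (hγ : γ ∈ Set.Ioo (0 : ℝ) 1) (hroot : f γ = 0)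
    (ξ : ℕ) (hξ : 0 < ξ) :
    μ {ω | ∃ n ≥ 1, X n ω ≤ -(ξ : ℤ)}
      ≤ ENNReal.ofReal (1 / (γ ^ (-(ξ : ℤ) - 1) - γ⁻¹ + 1)) :=
  random_walk_hitting_probability_bound_general μ l p hp_nonneg hp_sum hp_supp step hmeas hindep
    hlaw X hX f hf γ hγ hroot ξ
end

section
/- Suppose the drift satisfies ∑_{i=-l}^{l} i·p(i) > 0 and that γ ∈ (0,1) satisfies f(γ) = 0. Then for every positive integer ξ, the probability that the walk ever reaches level −ξ or below decays exponentially: ℙ(∃ n ≥ 1, X_n ≤ −ξ) < γ^{ξ}. -/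
open MeasureTheory ProbabilityTheory Finset

/-!
Let `r = 𝔼[γ ^ step k] = ∑ γ ^ i p(i)`. Multiplying `f(γ)` by `1 - γ` telescopes its geometric sums
into `1 - r = (1 - γ) (f(γ) + ∑_{i ≥ 1} (1 - γ ^ i) p(i))`, so `f(γ) = 0` and the positive drift
give `r < 1`. On the event `Bₙ` that the walk stayed above `-ξ` up to time `n`, independence of the
next step gives `𝔼[γ ^ Xₙ₊₁; Bₙ] = r 𝔼[γ ^ Xₙ; Bₙ]`, and `γ ^ Xₙ₊₁ ≥ γ ^ (-ξ)` at the first passage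
below `-ξ`. Summing over the first-passage time yields `γ ^ (-ξ) ℙ(hit) ≤ r`, i.e.
`ℙ(hit) ≤ r γ ^ ξ < γ ^ ξ`.
-/

theorem sum_Icc_neg_natCast (l : ℕ) (h : ℤ → ℝ) :
    ∑ i ∈ Icc (-(l : ℤ)) l, h i
      = ∑ i ∈ Icc 1 l, h (-(i : ℤ)) + h 0 + ∑ i ∈ Icc 1 l, h i := by
  induction l with
  | zero => simp
  | succ n ih =>
    have hIcc : Icc (-(n + 1 : ℤ)) (n + 1) = insert (-(n + 1 : ℤ)) (insert (n + 1 : ℤ)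
        (Icc (-(n : ℤ)) n)) := by
      ext x; simp only [mem_Icc, mem_insert]; omega
    rw [Nat.cast_succ, hIcc, sum_insert (by simp; omega), sum_insert (by simp), ih,
      ← insert_Icc_right_eq_Icc_add_one (by omega), sum_insert (by simp), sum_insert (by simp)]
    push_cast
    ring

theorem one_sub_mul_sum_Icc_pow (x : ℝ) (i : ℕ) :
    (1 - x) * ∑ j ∈ Icc 1 i, x ^ j = x - x ^ (i + 1) := by
  rw [← Ico_add_one_right_eq_Icc, mul_comm, geom_sum_Ico_mul_neg x (by omega), pow_one]

theorem one_sub_mul_sum_Icc_zpow_neg {x : ℝ} (hx : x ≠ 0) (i : ℕ) :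
    (1 - x) * ∑ j ∈ Icc 1 i, x ^ (-(j : ℤ)) = x ^ (-(i : ℤ)) - 1 := by
  have h := one_sub_mul_sum_Icc_pow x⁻¹ i
  simp only [zpow_neg, zpow_natCast, ← inv_pow] at h ⊢
  rw [pow_succ] at h
  have : (1 - x) = -x * (1 - x⁻¹) := by field_simp; ring
  rw [this, mul_assoc, h]
  field_simp
  ring

theorem one_sub_sum_zpow_mul_eq (l : ℕ) {p : ℤ → ℝ} (hp_sum : ∑ i ∈ Icc (-(l : ℤ)) l, p i = 1)
    {γ : ℝ} (hγ : γ ≠ 0) :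
    1 - ∑ i ∈ Icc (-(l : ℤ)) l, γ ^ i * p i
      = (1 - γ) * ((∑ i ∈ Icc 1 l, (∑ j ∈ Icc 1 i, γ ^ j) * p i
          - ∑ i ∈ Icc 1 l, (∑ j ∈ Icc 1 i, γ ^ (-(j : ℤ))) * p (-(i : ℤ)))
        + ∑ i ∈ Icc 1 l, (1 - γ ^ i) * p i) := by
  have hpos : (1 - γ) * ∑ i ∈ Icc 1 l, (∑ j ∈ Icc 1 i, γ ^ j) * p i
      = γ * ∑ i ∈ Icc 1 l, p i - γ * ∑ i ∈ Icc 1 l, γ ^ i * p i := by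
    rw [mul_sum, mul_sum, mul_sum, ← sum_sub_distrib]
    refine sum_congr rfl fun i _ => ?_
    rw [← mul_assoc, one_sub_mul_sum_Icc_pow]
    ring
  have hneg : (1 - γ) * ∑ i ∈ Icc 1 l, (∑ j ∈ Icc 1 i, γ ^ (-(j : ℤ))) * p (-(i : ℤ))
      = ∑ i ∈ Icc 1 l, γ ^ (-(i : ℤ)) * p (-(i : ℤ)) - ∑ i ∈ Icc 1 l, p (-(i : ℤ)) := by
    rw [mul_sum, ← sum_sub_distrib]
    refine sum_congr rfl fun i _ => ?_
    rw [← mul_assoc, one_sub_mul_sum_Icc_zpow_neg hγ]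
    ring
  have hone : ∑ i ∈ Icc 1 l, (1 - γ ^ i) * p i
      = ∑ i ∈ Icc 1 l, p i - ∑ i ∈ Icc 1 l, γ ^ i * p i := by
    rw [← sum_sub_distrib]
    exact sum_congr rfl fun i _ => by ring
  have hsplit := sum_Icc_neg_natCast l p
  rw [hp_sum] at hsplit
  rw [sum_Icc_neg_natCast]
  simp only [zpow_natCast, zpow_zero, one_mul]
  linear_combination hsplit - hpos + hneg - (1 - γ) * hone

theorem exists_pos_of_sum_mul_pos {l : ℕ} {p : ℤ → ℝ} (hp_nonneg : ∀ i, 0 ≤ p i)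
    (hdrift : 0 < ∑ i ∈ Icc (-(l : ℤ)) l, (i : ℝ) * p i) : ∃ i ∈ Icc 1 l, 0 < p i := by
  obtain ⟨i, hi, hpos⟩ : ∃ i ∈ Icc (-(l : ℤ)) l, 0 < (i : ℝ) * p i :=
    exists_lt_of_sum_lt (by simpa using hdrift)
  have hi0 : (0 : ℝ) < i := pos_of_mul_pos_left hpos (hp_nonneg i)
  lift i to ℕ using by exact_mod_cast hi0.le
  refine ⟨i, ?_, pos_of_mul_pos_right hpos hi0.le⟩
  simp only [mem_Icc] at hi ⊢
  exact ⟨by exact_mod_cast hi0, by exact_mod_cast hi.2⟩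

theorem sum_zpow_mul_lt_one {l : ℕ} {p : ℤ → ℝ} (hp_nonneg : ∀ i, 0 ≤ p i)
    (hp_sum : ∑ i ∈ Icc (-(l : ℤ)) l, p i = 1)
    (hdrift : 0 < ∑ i ∈ Icc (-(l : ℤ)) l, (i : ℝ) * p i) {γ : ℝ} (hγ0 : 0 < γ) (hγ1 : γ < 1)
    (hroot : ∑ i ∈ Icc 1 l, (∑ j ∈ Icc 1 i, γ ^ j) * p i
      = ∑ i ∈ Icc 1 l, (∑ j ∈ Icc 1 i, γ ^ (-(j : ℤ))) * p (-(i : ℤ))) :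
    ∑ i ∈ Icc (-(l : ℤ)) l, γ ^ i * p i < 1 := by
  obtain ⟨i, hi, hpi⟩ := exists_pos_of_sum_mul_pos hp_nonneg hdrift
  have hterm : ∀ j ∈ Icc 1 l, 0 ≤ (1 - γ ^ j) * p j := fun j _ =>
    mul_nonneg (sub_nonneg.mpr (pow_le_one₀ hγ0.le hγ1.le)) (hp_nonneg j)
  have hsum : 0 < ∑ j ∈ Icc 1 l, (1 - γ ^ j) * p j :=
    sum_pos' hterm ⟨i, hi, mul_pos (sub_pos.mpr (pow_lt_one₀ hγ0.le hγ1 (by simp at hi; omega)))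
      hpi⟩
  have key := one_sub_sum_zpow_mul_eq l hp_sum hγ0.ne'
  rw [hroot, sub_self, zero_add] at key
  nlinarith

section Law

variable {Ω : Type*} [MeasurableSpace Ω] {μ : Measure Ω} {Z : Ω → ℤ} {p : ℤ → ℝ}

theorem map_eq_sum_smul_dirac (hZ : Measurable Z)
    (hlaw : ∀ i, μ {ω | Z ω = i} = ENNReal.ofReal (p i)) :
    μ.map Z = Measure.sum fun i => ENNReal.ofReal (p i) • Measure.dirac i := by
  rw [← (μ.map Z).sum_smul_dirac]
  congr with i : 1
  rw [Measure.map_apply hZ (measurableSet_singleton i)]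
  exact congrArg (· • Measure.dirac i) (hlaw i)

theorem integrable_comp_of_law (hZ : Measurable Z)
    (hlaw : ∀ i, μ {ω | Z ω = i} = ENNReal.ofReal (p i)) {s : Finset ℤ}
    (hp_supp : ∀ i ∉ s, p i = 0) (g : ℤ → ℝ) : Integrable (fun ω => g (Z ω)) μ := by
  rw [← Function.comp_def, ← integrable_map_measure
    StronglyMeasurable.of_discrete.aestronglyMeasurable hZ.aemeasurable, map_eq_sum_smul_dirac hZ hlaw]
  exact integrable_sum_dirac (fun _ => ENNReal.ofReal_ne_top)
    (summable_of_ne_finset_zero (s := s) fun i hi => by simp [hp_supp i hi])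

theorem integral_comp_eq_sum_of_law (hZ : Measurable Z)
    (hlaw : ∀ i, μ {ω | Z ω = i} = ENNReal.ofReal (p i)) (hp_nonneg : ∀ i, 0 ≤ p i)
    {s : Finset ℤ} (hp_supp : ∀ i ∉ s, p i = 0) (g : ℤ → ℝ) :
    ∫ ω, g (Z ω) ∂μ = ∑ i ∈ s, g i * p i := by
  rw [← integral_map hZ.aemeasurable StronglyMeasurable.of_discrete.aestronglyMeasurable,
    map_eq_sum_smul_dirac hZ hlaw, integral_sum_dirac_eq_tsum (fun _ => ENNReal.ofReal_ne_top)
    (summable_of_ne_finset_zero (s := s) fun i hi => by simp [hp_supp i hi]),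
    tsum_eq_sum fun i hi => by simp [hp_supp i hi]]
  exact sum_congr rfl fun i _ => by rw [ENNReal.toReal_ofReal (hp_nonneg i), smul_eq_mul, mul_comm]

end Law

theorem mul_sum_range_le_of_add_le_mul {K r : ℝ} {a d : ℕ → ℝ} (hr0 : 0 ≤ r) (hr1 : r ≤ 1)
    (ha : ∀ n, 0 ≤ a n) (ha0 : a 0 ≤ 1) (h : ∀ n, K * d n + a (n + 1) ≤ r * a n) (N : ℕ) :
    K * ∑ n ∈ range N, d n ≤ r := by
  have hsucc : ∀ N, K * ∑ n ∈ range (N + 1), d n + a (N + 1) ≤ r := by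
    intro N
    induction N with
    | zero => simpa using (h 0).trans (mul_le_of_le_one_right hr0 ha0)
    | succ N ih =>
      rw [sum_range_succ, mul_add]
      linarith [h (N + 1), mul_le_of_le_one_left (ha (N + 1)) hr1]
  cases N with
  | zero => simpa using hr0
  | succ N => linarith [hsucc N, ha (N + 1)]

theorem measure_iUnion_le_of_setIntegral_le {Ω : Type*} [MeasurableSpace Ω] {μ : Measure Ω}
    [IsFiniteMeasure μ] {W : ℕ → Ω → ℝ} {E : ℕ → Set Ω} {K r : ℝ} (hK : 0 < K) (hr0 : 0 ≤ r)
    (hr1 : r ≤ 1) (hE : ∀ n, MeasurableSet (E n)) (hW : ∀ n, Integrable (W n) μ)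
    (hW_nonneg : ∀ n ω, 0 ≤ W n ω) (hW0 : ∫ ω, W 0 ω ∂μ ≤ 1)
    (hWE : ∀ n, ∀ ω ∈ E n, K ≤ W (n + 1) ω)
    (hsuper : ∀ n, ∫ ω in ⋂ j < n, (E j)ᶜ, W (n + 1) ω ∂μ ≤ r * ∫ ω in ⋂ j < n, (E j)ᶜ, W n ω ∂μ) :
    μ (⋃ n, E n) ≤ ENNReal.ofReal (r / K) := by
  set B : ℕ → Set Ω := fun n => ⋂ j < n, (E j)ᶜ
  have hB : ∀ n, MeasurableSet (B n) := fun n =>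
    .iInter fun j => .iInter fun _ => (hE j).compl
  have hstep : ∀ n, K * μ.real (disjointed E n) + ∫ ω in B (n + 1), W (n + 1) ω ∂μ
      ≤ r * ∫ ω in B n, W n ω ∂μ := by
    intro n
    have hsplit := integral_inter_add_sdiff (hE n) (hW (n + 1)).integrableOn (s := B n)
    have hBsucc : B (n + 1) = B n \ E n := by simp only [B, Set.biInter_lt_succ, Set.sdiff_eq]
    rw [Set.inter_comm, ← disjointed_eq_inter_compl, ← hBsucc] at hsplit
    have hlow := setIntegral_ge_of_const_le_real (MeasurableSet.disjointed hE n)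
      (measure_ne_top _ _) (fun ω hω => hWE n ω (disjointed_subset E n hω))
      (hW (n + 1)).integrableOn
    linarith [hsuper n]
  have hbound := mul_sum_range_le_of_add_le_mul hr0 hr1
    (fun n => setIntegral_nonneg (hB n) fun ω _ => hW_nonneg n ω) (by simpa [B] using hW0) hstep
  rw [← iUnion_disjointed, measure_iUnion (disjoint_disjointed E) (MeasurableSet.disjointed hE)]
  refine ENNReal.tsum_le_of_sum_range_le fun N => ?_
  rw [ENNReal.le_ofReal_iff_toReal_le (ENNReal.sum_ne_top.mpr fun _ _ => measure_ne_top _ _)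
      (div_nonneg hr0 hK.le),
    ENNReal.toReal_sum fun _ _ => measure_ne_top _ _]
  exact (le_div_iff₀' hK).mpr (hbound N)

section Walk

variable {Ω : Type*} {step : ℕ → Ω → ℤ}

def walk (step : ℕ → Ω → ℤ) (n : ℕ) (ω : Ω) : ℤ := ∑ k ∈ range n, step k ω

abbrev stepsBefore (step : ℕ → Ω → ℤ) (n : ℕ) : MeasurableSpace Ω :=
  ⨆ k ∈ Set.Iio n, MeasurableSpace.comap (step k) inferInstance

theorem walk_succ (step : ℕ → Ω → ℤ) (n : ℕ) (ω : Ω) :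
    walk step (n + 1) ω = walk step n ω + step n ω :=
  sum_range_succ _ _

theorem measurable_step_stepsBefore {k n : ℕ} (hk : k < n) :
    Measurable[stepsBefore step n] (step k) :=
  Measurable.of_comap_le
    (le_iSup₂ (f := fun k (_ : k ∈ Set.Iio n) => MeasurableSpace.comap (step k) inferInstance) k hk)

theorem measurable_walk_stepsBefore {k n : ℕ} (hk : k ≤ n) :
    Measurable[stepsBefore step n] (walk step k) :=
  Finset.measurable_sum _ fun j hj => measurable_step_stepsBefore (by simp at hj; omega)

variable [MeasurableSpace Ω] {μ : Measure Ω}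

theorem stepsBefore_le (hmeas : ∀ k, Measurable (step k)) (n : ℕ) :
    stepsBefore step n ≤ ‹MeasurableSpace Ω› :=
  iSup₂_le fun k _ => (hmeas k).comap_le

theorem indepFun_step_of_measurable_stepsBefore {β : Type*} [MeasurableSpace β] {F : Ω → β}
    (hmeas : ∀ k, Measurable (step k)) (hindep : iIndepFun step μ) {n : ℕ}
    (hF : Measurable[stepsBefore step n] F) : IndepFun F (step n) μ := by
  rw [IndepFun_iff_Indep]
  have h := indep_iSup_of_disjoint (fun k => (hmeas k).comap_le)
    ((iIndepFun_iff_iIndep _ _ _).mp hindep) (S := Set.Iio n) (T := {n}) (by simp)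
  refine indep_of_indep_of_le_right (indep_of_indep_of_le_left h hF.comap_le) ?_
  exact le_iSup₂ (f := fun k (_ : k ∈ ({n} : Set ℕ)) => MeasurableSpace.comap (step k) _) n rfl

theorem integrable_zpow_walk [IsFiniteMeasure μ] {γ : ℝ} (hγ : γ ≠ 0)
    (hmeas : ∀ k, Measurable (step k)) (hindep : iIndepFun step μ)
    (hint : ∀ k, Integrable (fun ω => γ ^ step k ω) μ) (n : ℕ) :
    Integrable (fun ω => γ ^ walk step n ω) μ := by
  induction n with
  | zero => simp [walk]
  | succ n ih =>
    simp only [walk_succ, zpow_add₀ hγ]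
    exact ((indepFun_step_of_measurable_stepsBefore hmeas hindep
      (Measurable.of_discrete.comp (measurable_walk_stepsBefore le_rfl))).comp measurable_id
      Measurable.of_discrete).integrable_mul ih (hint n)

theorem setIntegral_zpow_walk_succ {γ : ℝ} (hγ : γ ≠ 0) (hmeas : ∀ k, Measurable (step k))
    (hindep : iIndepFun step μ) {n : ℕ} {S : Set Ω} (hS : MeasurableSet[stepsBefore step n] S) :
    ∫ ω in S, γ ^ walk step (n + 1) ω ∂μ
      = (∫ ω in S, γ ^ walk step n ω ∂μ) * ∫ ω, γ ^ step n ω ∂μ := by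
  have hS' := stepsBefore_le hmeas n S hS
  have hF : Measurable[stepsBefore step n] (S.indicator fun ω => γ ^ walk step n ω) :=
    (Measurable.of_discrete.comp (measurable_walk_stepsBefore le_rfl)).indicator hS
  have hprod : S.indicator (fun ω => γ ^ walk step (n + 1) ω)
      = fun ω => S.indicator (fun ω => γ ^ walk step n ω) ω * γ ^ step n ω := by
    funext ω
    by_cases hω : ω ∈ S <;> simp [hω, walk_succ, zpow_add₀ hγ]
  rw [← integral_indicator hS', ← integral_indicator hS', hprod]
  exact ((indepFun_step_of_measurable_stepsBefore hmeas hindep hF).comp measurable_id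
    Measurable.of_discrete).integral_fun_mul_eq_mul_integral
    (hF.mono (stepsBefore_le hmeas n) le_rfl).aestronglyMeasurable
    (Measurable.of_discrete.comp (hmeas n)).aestronglyMeasurable

theorem measure_exists_walk_le_neg_le [IsProbabilityMeasure μ] {γ r : ℝ} (hγ0 : 0 < γ)
    (hγ1 : γ ≤ 1) (hr : r ≤ 1) (hmeas : ∀ k, Measurable (step k)) (hindep : iIndepFun step μ)
    (hint : ∀ k, Integrable (fun ω => γ ^ step k ω) μ) (hmom : ∀ k, ∫ ω, γ ^ step k ω ∂μ = r)
    (ξ : ℕ) :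
    μ {ω | ∃ n ≥ 1, walk step n ω ≤ -(ξ : ℤ)} ≤ ENNReal.ofReal (r * γ ^ ξ) := by
  have hhit : {ω | ∃ n ≥ 1, walk step n ω ≤ -(ξ : ℤ)}
      = ⋃ n, {ω | walk step (n + 1) ω ≤ -(ξ : ℤ)} := by
    ext ω
    simp only [Set.mem_ofPred_eq, Set.mem_iUnion]
    constructor
    · rintro ⟨n, hn, hω⟩
      exact ⟨n - 1, by rwa [Nat.sub_add_cancel hn]⟩
    · rintro ⟨n, hω⟩
      exact ⟨n + 1, by omega, hω⟩
  have hr0 : 0 ≤ r := hmom 0 ▸ integral_nonneg fun ω => (zpow_pos hγ0 _).le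
  have hdiv : r / γ ^ (-(ξ : ℤ)) = r * γ ^ ξ := by rw [zpow_neg, zpow_natCast, div_inv_eq_mul]
  rw [hhit, ← hdiv]
  refine measure_iUnion_le_of_setIntegral_le (zpow_pos hγ0 _) hr0 hr
    (fun n => measurableSet_le ((measurable_walk_stepsBefore le_rfl).mono
      (stepsBefore_le hmeas _) le_rfl) measurable_const)
    (integrable_zpow_walk hγ0.ne' hmeas hindep hint) (fun n ω => (zpow_pos hγ0 _).le)
    (by simp [walk]) (fun n ω hω => zpow_le_zpow_right_of_le_one₀ hγ0 hγ1 hω) fun n => ?_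
  have hS : MeasurableSet[stepsBefore step n] (⋂ j < n, {ω | walk step (j + 1) ω ≤ -(ξ : ℤ)}ᶜ) :=
    .iInter fun j => .iInter fun hj =>
      (measurableSet_le (measurable_walk_stepsBefore hj) measurable_const).compl
  rw [setIntegral_zpow_walk_succ hγ0.ne' hmeas hindep hS, hmom, mul_comm]

end Walk

theorem random_walk_hitting_probability_exponential_decay_general
    {Ω : Type*} [MeasurableSpace Ω] (μ : Measure Ω) [IsProbabilityMeasure μ]
    (l : ℕ)
    (p : ℤ → ℝ)
    (hp_nonneg : ∀ i, 0 ≤ p i)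
    (hp_sum : ∑ i ∈ Finset.Icc (-(l : ℤ)) (l : ℤ), p i = 1)
    (hp_supp : ∀ i : ℤ, (l : ℤ) < |i| → p i = 0)
    (step : ℕ → Ω → ℤ)
    (hmeas : ∀ k, Measurable (step k))
    (hindep : iIndepFun step μ)
    (hlaw : ∀ k i, μ {ω | step k ω = i} = ENNReal.ofReal (p i))
    (X : ℕ → Ω → ℤ)
    (hX : ∀ n ω, X n ω = ∑ k ∈ Finset.range n, step k ω)
    (hdrift : 0 < ∑ i ∈ Finset.Icc (-(l : ℤ)) (l : ℤ), (i : ℝ) * p i)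
    (f : ℝ → ℝ)
    (hf : ∀ g : ℝ, 0 < g →
      f g = (∑ i ∈ Finset.Icc 1 l, (∑ j ∈ Finset.Icc 1 i, g ^ j) * p (i : ℤ))
          - (∑ i ∈ Finset.Icc 1 l, (∑ j ∈ Finset.Icc 1 i, g ^ (-(j : ℤ))) * p (-(i : ℤ))))
    (γ : ℝ) (hγ : γ ∈ Set.Ioo (0 : ℝ) 1) (hroot : f γ = 0)
    (ξ : ℕ) :
    μ {ω | ∃ n ≥ 1, X n ω ≤ -(ξ : ℤ)}
      < ENNReal.ofReal (γ ^ ξ) := by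
  obtain ⟨hγ0, hγ1⟩ := hγ
  obtain rfl : X = walk step := funext fun n => funext (hX n)
  have hsupp : ∀ i ∉ Icc (-(l : ℤ)) l, p i = 0 := fun i hi =>
    hp_supp i (not_le.mp (by rwa [mem_Icc, ← abs_le] at hi))
  have hr := sum_zpow_mul_lt_one hp_nonneg hp_sum hdrift hγ0 hγ1
    (sub_eq_zero.mp ((hf γ hγ0).symm.trans hroot))
  calc μ {ω | ∃ n ≥ 1, walk step n ω ≤ -(ξ : ℤ)}
      ≤ ENNReal.ofReal ((∑ i ∈ Icc (-(l : ℤ)) l, γ ^ i * p i) * γ ^ ξ) :=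
        measure_exists_walk_le_neg_le hγ0 hγ1.le hr.le hmeas hindep
          (fun k => integrable_comp_of_law (hmeas k) (hlaw k) hsupp _)
          (fun k => integral_comp_eq_sum_of_law (hmeas k) (hlaw k) hp_nonneg hsupp _) ξ
    _ < ENNReal.ofReal (γ ^ ξ) :=
        (ENNReal.ofReal_lt_ofReal_iff (pow_pos hγ0 ξ)).mpr
          (mul_lt_of_lt_one_left (pow_pos hγ0 ξ) hr)

/-- **Hitting probability bound for a positively drifted random walk.**
Let `p` be a probability mass function on `ℤ` supported on `[-l, l]`, let `step k` be i.i.d.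
steps with law `p`, and let `X n = step 0 + ⋯ + step (n-1)` be the associated random walk
started at `0`.  If the drift `∑ i, i * p i` is positive and `γ ∈ (0,1)` is a root of
`f(γ) = ∑_{i=1}^l (∑_{j=1}^i γ^j) p(i) − ∑_{i=1}^l (∑_{j=1}^i γ^{−j}) p(−i)`, then for every
positive integer `ξ`, the probability that the walk ever reaches level `−ξ` or below decays
exponentially: it is strictly less than `γ^ξ`. -/
theorem random_walk_hitting_probability_exponential_decay
    {Ω : Type*} [MeasurableSpace Ω] (μ : Measure Ω) [IsProbabilityMeasure μ]
    (l : ℕ) (hl : 0 < l)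
    (p : ℤ → ℝ)
    (hp_nonneg : ∀ i, 0 ≤ p i)
    (hp_sum : ∑ i ∈ Finset.Icc (-(l : ℤ)) (l : ℤ), p i = 1)
    (hp_supp : ∀ i : ℤ, (l : ℤ) < |i| → p i = 0)
    (step : ℕ → Ω → ℤ)
    (hmeas : ∀ k, Measurable (step k))
    (hindep : iIndepFun step μ)
    (hlaw : ∀ k i, μ {ω | step k ω = i} = ENNReal.ofReal (p i))
    (X : ℕ → Ω → ℤ)
    (hX : ∀ n ω, X n ω = ∑ k ∈ Finset.range n, step k ω)
    (hdrift : 0 < ∑ i ∈ Finset.Icc (-(l : ℤ)) (l : ℤ), (i : ℝ) * p i)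
    (f : ℝ → ℝ)
    (hf : ∀ g : ℝ, 0 < g →
      f g = (∑ i ∈ Finset.Icc 1 l, (∑ j ∈ Finset.Icc 1 i, g ^ j) * p (i : ℤ))
          - (∑ i ∈ Finset.Icc 1 l, (∑ j ∈ Finset.Icc 1 i, g ^ (-(j : ℤ))) * p (-(i : ℤ))))
    (γ : ℝ) (hγ : γ ∈ Set.Ioo (0 : ℝ) 1) (hroot : f γ = 0)
    (ξ : ℕ) (hξ : 0 < ξ) :
    μ {ω | ∃ n ≥ 1, X n ω ≤ -(ξ : ℤ)}
      < ENNReal.ofReal (γ ^ ξ) :=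
  random_walk_hitting_probability_exponential_decay_general μ l p hp_nonneg hp_sum hp_supp step
    hmeas hindep hlaw X hX hdrift f hf γ hγ hroot ξ
end

section
/- Suppose the drift satisfies ∑_{i=-l}^{l} i·p(i) > 0 and that p(−i) > 0 for some i ∈ {1, …, l}. Then there exists a unique γ ∈ (0,1) with f(γ) = 0. -/
/-!
Split `f = A - B` with `A(γ) = ∑ᵢ (∑_{j ≤ i} γ^j) p(i)` and `B(γ) = ∑ᵢ (∑_{j ≤ i} γ^{-j}) p(-i)`.
On `(0, ∞)` the sum `A` is nondecreasing and, since some `p(-i₀) > 0`, `B` is strictly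
decreasing, so `f` is strictly increasing and has at most one zero. At `γ = 1` each inner sum
equals `i`, so `f 1` is the drift, which is positive. As `γ → 0⁺`, `A(γ) → 0` while
`B(γ) ≥ γ⁻¹ p(-i₀) → ∞`, so `f` is negative somewhere in `(0, 1)`, and the intermediate value
theorem gives the zero.
-/

open Finset Filter Topology

theorem Finset.sum_Icc_neg_natCast_natCast {M : Type*} [AddCommMonoid M] (l : ℕ) (g : ℤ → M) :
    ∑ i ∈ Icc (-(l : ℤ)) l, g i = g 0 + ∑ i ∈ Icc 1 l, (g i + g (-(i : ℤ))) := by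
  induction l with
  | zero => simp
  | succ n ih =>
    have hIcc : Icc (-((n + 1 : ℕ) : ℤ)) ((n + 1 : ℕ) : ℤ)
        = insert (-((n : ℤ) + 1)) (insert ((n : ℤ) + 1) (Icc (-(n : ℤ)) n)) := by
      ext x; simp only [mem_Icc, mem_insert]; omega
    have hnotMem : ((n : ℤ) + 1) ∉ Icc (-(n : ℤ)) n := by simp
    have hnotMem' : -((n : ℤ) + 1) ∉ insert ((n : ℤ) + 1) (Icc (-(n : ℤ)) n) := by
      simp only [mem_insert, mem_Icc, not_or]; omega
    rw [hIcc, sum_insert hnotMem', sum_insert hnotMem, sum_Icc_succ_top (by omega), ih]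
    push_cast
    abel

section ScaleFunction

variable (l : ℕ) (p : ℤ → ℝ)

noncomputable def scaleFunUp (γ : ℝ) : ℝ :=
  ∑ i ∈ Icc 1 l, (∑ j ∈ Icc 1 i, γ ^ j) * p i

noncomputable def scaleFunDown (γ : ℝ) : ℝ :=
  ∑ i ∈ Icc 1 l, (∑ j ∈ Icc 1 i, γ ^ (-(j : ℤ))) * p (-(i : ℤ))

noncomputable def scaleFun (γ : ℝ) : ℝ :=
  scaleFunUp l p γ - scaleFunDown l p γ

variable {l p}

theorem monotoneOn_scaleFunUp (hp : ∀ i, 0 ≤ p i) : MonotoneOn (scaleFunUp l p) (Set.Ici 0) :=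
  fun _ ha _ _ hab => sum_le_sum fun _ _ => mul_le_mul_of_nonneg_right
    (sum_le_sum fun j _ => pow_le_pow_left₀ ha hab j) (hp _)

theorem strictAntiOn_scaleFunDown (hp : ∀ i, 0 ≤ p i) {i₀ : ℕ} (hi₀ : i₀ ∈ Icc 1 l)
    (hpi₀ : 0 < p (-(i₀ : ℤ))) : StrictAntiOn (scaleFunDown l p) (Set.Ioi 0) := by
  intro a ha b _ hab
  have hpow_lt (j : ℕ) (hj : j ∈ Icc 1 i₀) : b ^ (-(j : ℤ)) < a ^ (-(j : ℤ)) := by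
    simp only [zpow_neg, zpow_natCast]
    exact inv_strictAnti₀ (pow_pos ha j) (pow_lt_pow_left₀ hab ha.le (by simp at hj; omega))
  have hpow_le (j : ℕ) : b ^ (-(j : ℤ)) ≤ a ^ (-(j : ℤ)) := by
    simp only [zpow_neg, zpow_natCast]
    exact inv_anti₀ (pow_pos ha j) (pow_le_pow_left₀ ha.le hab.le j)
  exact sum_lt_sum (fun i _ => mul_le_mul_of_nonneg_right (sum_le_sum fun j _ => hpow_le j) (hp _))
    ⟨i₀, hi₀, mul_lt_mul_of_pos_right
      (sum_lt_sum_of_nonempty (nonempty_Icc.mpr (mem_Icc.mp hi₀).1) hpow_lt) hpi₀⟩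

theorem strictMonoOn_scaleFun (hp : ∀ i, 0 ≤ p i) {i₀ : ℕ} (hi₀ : i₀ ∈ Icc 1 l)
    (hpi₀ : 0 < p (-(i₀ : ℤ))) : StrictMonoOn (scaleFun l p) (Set.Ioi 0) := fun a ha b hb hab => by
  have hup := monotoneOn_scaleFunUp (l := l) hp (Set.mem_Ici.mpr ha.out.le)
    (Set.mem_Ici.mpr hb.out.le) hab.le
  have hdown := strictAntiOn_scaleFunDown hp hi₀ hpi₀ ha hb hab
  unfold scaleFun
  linarith

theorem scaleFun_one : scaleFun l p 1 = ∑ i ∈ Icc (-(l : ℤ)) l, (i : ℝ) * p i := by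
  simp [scaleFun, scaleFunUp, scaleFunDown, sum_Icc_neg_natCast_natCast, sum_add_distrib,
    sub_eq_add_neg]

theorem continuousOn_scaleFun : ContinuousOn (scaleFun l p) (Set.Ioi 0) := by
  unfold scaleFun scaleFunUp scaleFunDown
  refine ContinuousOn.sub (by fun_prop) (continuousOn_finsetSum _ fun i _ =>
    (continuousOn_finsetSum _ fun j _ => ?_).mul continuousOn_const)
  exact continuousOn_id.zpow₀ _ fun x hx => Or.inl (ne_of_gt hx)

theorem tendsto_scaleFunUp_nhdsGT_zero : Tendsto (scaleFunUp l p) (𝓝[>] 0) (𝓝 0) := by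
  have hcont : Continuous (scaleFunUp l p) := by unfold scaleFunUp; fun_prop
  have hzero : scaleFunUp l p 0 = 0 :=
    sum_eq_zero fun i _ => by
      rw [sum_eq_zero fun j hj => zero_pow (by simp at hj; omega), zero_mul]
  simpa [hzero] using hcont.continuousWithinAt.tendsto (s := Set.Ioi 0) (x := 0)

theorem inv_mul_le_scaleFunDown (hp : ∀ i, 0 ≤ p i) {i₀ : ℕ} (hi₀ : i₀ ∈ Icc 1 l) {γ : ℝ}
    (hγ : 0 < γ) : γ⁻¹ * p (-(i₀ : ℤ)) ≤ scaleFunDown l p γ := by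
  have hterm_nonneg (i : ℕ) : 0 ≤ (∑ j ∈ Icc 1 i, γ ^ (-(j : ℤ))) * p (-(i : ℤ)) :=
    mul_nonneg (sum_nonneg fun j _ => (zpow_pos hγ _).le) (hp _)
  have hinv_le : γ⁻¹ ≤ ∑ j ∈ Icc 1 i₀, γ ^ (-(j : ℤ)) := by
    simpa using single_le_sum (f := fun j : ℕ => γ ^ (-(j : ℤ)))
      (fun j _ => (zpow_pos hγ _).le) (mem_Icc.mpr ⟨le_rfl, (mem_Icc.mp hi₀).1⟩)
  exact (mul_le_mul_of_nonneg_right hinv_le (hp _)).trans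
    (single_le_sum (fun i _ => hterm_nonneg i) hi₀)

theorem tendsto_scaleFun_nhdsGT_zero_atBot (hp : ∀ i, 0 ≤ p i) {i₀ : ℕ} (hi₀ : i₀ ∈ Icc 1 l)
    (hpi₀ : 0 < p (-(i₀ : ℤ))) : Tendsto (scaleFun l p) (𝓝[>] 0) atBot := by
  have hdown : Tendsto (scaleFunDown l p) (𝓝[>] 0) atTop :=
    tendsto_atTop_mono' _ (eventually_mem_nhdsWithin.mono fun γ hγ =>
      inv_mul_le_scaleFunDown hp hi₀ hγ) (tendsto_inv_nhdsGT_zero.atTop_mul_const hpi₀)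
  rw [show scaleFun l p = fun γ => scaleFunUp l p γ + -scaleFunDown l p γ from
    funext fun _ => sub_eq_add_neg _ _]
  exact tendsto_scaleFunUp_nhdsGT_zero.add_atBot (tendsto_neg_atTop_atBot.comp hdown)

theorem existsUnique_scaleFun_eq_zero (hp : ∀ i, 0 ≤ p i) {i₀ : ℕ} (hi₀ : i₀ ∈ Icc 1 l)
    (hpi₀ : 0 < p (-(i₀ : ℤ))) (hone : 0 < scaleFun l p 1) :
    ∃! γ, γ ∈ Set.Ioo (0 : ℝ) 1 ∧ scaleFun l p γ = 0 := by
  obtain ⟨γ₀, hneg, hγ₀⟩ := ((tendsto_scaleFun_nhdsGT_zero_atBot hp hi₀ hpi₀).eventually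
    (eventually_lt_atBot 0)).and (Ioo_mem_nhdsGT zero_lt_one) |>.exists
  obtain ⟨γ, hγ, hγ_root⟩ := intermediate_value_Ioo hγ₀.2.le
    (continuousOn_scaleFun.mono fun x hx => hγ₀.1.trans_le hx.1) ⟨hneg, hone⟩
  have hγ01 : γ ∈ Set.Ioo (0 : ℝ) 1 := ⟨hγ₀.1.trans hγ.1, hγ.2⟩
  refine ⟨γ, ⟨hγ01, hγ_root⟩, fun δ ⟨hδ, hδ_root⟩ => ?_⟩
  exact (strictMonoOn_scaleFun hp hi₀ hpi₀).injOn hδ.1 hγ01.1 (hδ_root.trans hγ_root.symm)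

end ScaleFunction

theorem random_walk_scale_root_exists_unique_general
    (l : ℕ)
    (p : ℤ → ℝ)
    (hp_nonneg : ∀ i, 0 ≤ p i)
    (hdrift : 0 < ∑ i ∈ Finset.Icc (-(l : ℤ)) (l : ℤ), (i : ℝ) * p i)
    (hneg : ∃ i ∈ Finset.Icc 1 l, 0 < p (-(i : ℤ)))
    (f : ℝ → ℝ)
    (hf : ∀ g : ℝ, 0 < g →
      f g = (∑ i ∈ Finset.Icc 1 l, (∑ j ∈ Finset.Icc 1 i, g ^ j) * p (i : ℤ))
          - (∑ i ∈ Finset.Icc 1 l, (∑ j ∈ Finset.Icc 1 i, g ^ (-(j : ℤ))) * p (-(i : ℤ)))) :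
    ∃! γ : ℝ, γ ∈ Set.Ioo (0 : ℝ) 1 ∧ f γ = 0 := by
  obtain ⟨i₀, hi₀, hpi₀⟩ := hneg
  rw [← scaleFun_one] at hdrift
  refine (existsUnique_congr fun γ => and_congr_right fun hγ => ?_).mpr
    (existsUnique_scaleFun_eq_zero hp_nonneg hi₀ hpi₀ hdrift)
  rw [hf γ hγ.1]
  rfl

/-- If the drift `∑ i, i * p i` of the step distribution `p` (supported on `[-l, l]`) is
positive and some negative step has positive probability, then the function
`f(γ) = ∑_{i=1}^l (∑_{j=1}^i γ^j) p(i) − ∑_{i=1}^l (∑_{j=1}^i γ^{−j}) p(−i)` has a unique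
root `γ` in the open interval `(0, 1)`. -/
theorem random_walk_scale_root_exists_unique
    (l : ℕ) (hl : 0 < l)
    (p : ℤ → ℝ)
    (hp_nonneg : ∀ i, 0 ≤ p i)
    (hp_sum : ∑ i ∈ Finset.Icc (-(l : ℤ)) (l : ℤ), p i = 1)
    (hp_supp : ∀ i : ℤ, (l : ℤ) < |i| → p i = 0)
    (hdrift : 0 < ∑ i ∈ Finset.Icc (-(l : ℤ)) (l : ℤ), (i : ℝ) * p i)
    (hneg : ∃ i ∈ Finset.Icc 1 l, 0 < p (-(i : ℤ)))
    (f : ℝ → ℝ)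
    (hf : ∀ g : ℝ, 0 < g →
      f g = (∑ i ∈ Finset.Icc 1 l, (∑ j ∈ Finset.Icc 1 i, g ^ j) * p (i : ℤ))
          - (∑ i ∈ Finset.Icc 1 l, (∑ j ∈ Finset.Icc 1 i, g ^ (-(j : ℤ))) * p (-(i : ℤ)))) :
    ∃! γ : ℝ, γ ∈ Set.Ioo (0 : ℝ) 1 ∧ f γ = 0 :=
  random_walk_scale_root_exists_unique_general l p hp_nonneg hdrift hneg f hf
end

section
/- Suppose γ ∈ (0,1) satisfies f(γ) = 0. Then for every integer x, the one-step expected increment of the scale function along the walk is nonnegative: ∑_{i=−l}^{l} p(i)·(g(x+i) − g(x)) ≥ 0, and this quantity equals 0 when x = 0. -/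
open Finset

/-!
Write `S(y) = (1 - γ^y)/(1 - γ)`, so that `S(x + i) = S(x) + γ^x S(i)`. The scale function is
`g = min(S, γS)`, hence `g(x) + γ^x g(i) ≤ min(S(x+i), γS(x+i)) = g(x+i)`. Averaging over the step
`i` gives `∑ p(i) (g(x+i) - g(x)) ≥ γ^x ∑ p(i) g(i) = γ^x f(γ) = 0`, with equality at `x = 0`.
-/

namespace RandomWalkScale

variable {γ : ℝ}

/-- The geometric sum `∑_{i < y} γ ^ i`, extended from `y : ℕ` to `y : ℤ` by its closed form. -/
noncomputable def signedGeomSum (γ : ℝ) (y : ℤ) : ℝ := (1 - γ ^ y) / (1 - γ)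

lemma signedGeomSum_add (hγ0 : γ ≠ 0) (hγ1 : γ ≠ 1) (x y : ℤ) :
    signedGeomSum γ (x + y) = signedGeomSum γ x + γ ^ x * signedGeomSum γ y := by
  have : 1 - γ ≠ 0 := sub_ne_zero.mpr hγ1.symm
  simp only [signedGeomSum, zpow_add₀ hγ0]
  field_simp
  ring

lemma signedGeomSum_one (hγ1 : γ ≠ 1) : signedGeomSum γ 1 = 1 := by
  simp [signedGeomSum, div_self (sub_ne_zero.mpr hγ1.symm)]

lemma sum_Icc_pow_eq (hγ0 : γ ≠ 0) (hγ1 : γ ≠ 1) (n : ℕ) :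
    ∑ i ∈ Icc 1 n, γ ^ i = γ * signedGeomSum γ n := by
  induction n with
  | zero => simp [signedGeomSum]
  | succ n ih =>
    rw [sum_Icc_succ_top (by omega), ih, Nat.cast_succ, signedGeomSum_add hγ0 hγ1,
      signedGeomSum_one hγ1, zpow_natCast, pow_succ]
    ring

lemma sum_Icc_zpow_neg_eq (hγ0 : γ ≠ 0) (hγ1 : γ ≠ 1) (n : ℕ) :
    ∑ i ∈ Icc 1 n, γ ^ (-(i : ℤ)) = -signedGeomSum γ (-n) := by
  induction n with
  | zero => simp [signedGeomSum]
  | succ n ih =>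
    have hstep := signedGeomSum_add hγ0 hγ1 (-((n + 1 : ℕ) : ℤ)) 1
    rw [signedGeomSum_one hγ1, show -((n + 1 : ℕ) : ℤ) + 1 = -n by push_cast; ring] at hstep
    rw [sum_Icc_succ_top (by omega), ih, hstep]
    ring

/-- The scale function `g`: for `γ < 1` the minimum picks `γ * signedGeomSum γ y` when
`y ≥ 0` and `signedGeomSum γ y` when `y ≤ 0`. -/
noncomputable def scale (γ : ℝ) (y : ℤ) : ℝ := min (signedGeomSum γ y) (γ * signedGeomSum γ y)

@[simp]
lemma scale_zero : scale γ 0 = 0 := by simp [scale, signedGeomSum]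

lemma scale_add_le (hγ0 : 0 < γ) (hγ1 : γ ≠ 1) (x i : ℤ) :
    scale γ x + γ ^ x * scale γ i ≤ scale γ (x + i) := by
  simp only [scale, signedGeomSum_add hγ0.ne' hγ1]
  set a := signedGeomSum γ x
  set b := signedGeomSum γ i
  apply le_min
  · gcongr <;> exact min_le_left _ _
  · calc min a (γ * a) + γ ^ x * min b (γ * b) ≤ γ * a + γ ^ x * (γ * b) := by
          gcongr <;> exact min_le_right _ _
      _ = γ * (a + γ ^ x * b) := by ring

lemma scale_of_pos (hγ : γ ∈ Set.Ioo (0 : ℝ) 1) {x : ℤ} (hx : 0 < x) :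
    scale γ x = ∑ i ∈ Icc 1 x.toNat, γ ^ i := by
  obtain ⟨hγ0, hγ1⟩ := hγ
  obtain ⟨n, rfl⟩ := Int.eq_ofNat_of_zero_le hx.le
  have hsum := sum_Icc_pow_eq hγ0.ne' hγ1.ne n
  have hnonneg : 0 ≤ γ * signedGeomSum γ n := hsum ▸ sum_nonneg fun i _ => by positivity
  rw [Int.toNat_natCast, hsum, scale, min_eq_right]
  nlinarith [nonneg_of_mul_nonneg_right hnonneg hγ0]

lemma scale_of_neg (hγ : γ ∈ Set.Ioo (0 : ℝ) 1) {x : ℤ} (hx : x < 0) :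
    scale γ x = -∑ i ∈ Icc 1 (-x).toNat, γ ^ (-(i : ℤ)) := by
  obtain ⟨hγ0, hγ1⟩ := hγ
  obtain ⟨n, hn⟩ := Int.eq_ofNat_of_zero_le (neg_nonneg.mpr hx.le)
  obtain rfl : x = -n := by omega
  have hsum := sum_Icc_zpow_neg_eq hγ0.ne' hγ1.ne n
  have hnonpos : signedGeomSum γ (-n) ≤ 0 :=
    neg_nonneg.mp (hsum ▸ sum_nonneg fun i _ => by positivity)
  rw [neg_neg, Int.toNat_natCast, hsum, neg_neg, scale, min_eq_left]
  nlinarith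

lemma sum_Icc_neg_self (F : ℤ → ℝ) (n : ℕ) :
    ∑ i ∈ Icc (-(n : ℤ)) n, F i = F 0 + ∑ i ∈ Icc 1 n, (F i + F (-i)) := by
  induction n with
  | zero => simp
  | succ n ih =>
    have hIcc : Icc (-((n + 1 : ℕ) : ℤ)) (n + 1 : ℕ)
        = insert (-((n : ℤ) + 1)) (insert ((n : ℤ) + 1) (Icc (-(n : ℤ)) n)) := by
      ext a; simp only [mem_Icc, mem_insert]; omega
    rw [hIcc, sum_insert (by simp only [mem_Icc, mem_insert]; omega),
      sum_insert (by simp only [mem_Icc]; omega), ih, sum_Icc_succ_top (by omega)]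
    push_cast
    ring

lemma sum_mul_scale_eq (hγ : γ ∈ Set.Ioo (0 : ℝ) 1) (p : ℤ → ℝ) (l : ℕ) :
    ∑ i ∈ Icc (-(l : ℤ)) l, p i * scale γ i
      = (∑ i ∈ Icc 1 l, (∑ j ∈ Icc 1 i, γ ^ j) * p i)
        - ∑ i ∈ Icc 1 l, (∑ j ∈ Icc 1 i, γ ^ (-(j : ℤ))) * p (-i) := by
  rw [sum_Icc_neg_self, scale_zero, mul_zero, zero_add, ← sum_sub_distrib]
  refine sum_congr rfl fun i hi => ?_
  have hi : 0 < (i : ℤ) := by have := (mem_Icc.mp hi).1; omega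
  rw [scale_of_pos hγ hi, scale_of_neg hγ (neg_neg_of_pos hi), neg_neg, Int.toNat_natCast]
  ring

end RandomWalkScale

open RandomWalkScale

theorem random_walk_scale_increment_nonneg_general
    (l : ℕ)
    (p : ℤ → ℝ)
    (hp_nonneg : ∀ i, 0 ≤ p i)
    (f : ℝ → ℝ)
    (hf : ∀ g : ℝ, 0 < g →
      f g = (∑ i ∈ Finset.Icc 1 l, (∑ j ∈ Finset.Icc 1 i, g ^ j) * p (i : ℤ))
          - (∑ i ∈ Finset.Icc 1 l, (∑ j ∈ Finset.Icc 1 i, g ^ (-(j : ℤ))) * p (-(i : ℤ))))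
    (γ : ℝ) (hγ : γ ∈ Set.Ioo (0 : ℝ) 1) (hroot : f γ = 0)
    (g : ℤ → ℝ)
    (hg_pos : ∀ x : ℤ, 0 < x → g x = ∑ i ∈ Finset.Icc 1 x.toNat, γ ^ i)
    (hg_zero : g 0 = 0)
    (hg_neg : ∀ x : ℤ, x < 0 → g x = -∑ i ∈ Finset.Icc 1 (-x).toNat, γ ^ (-(i : ℤ))) :
    (∀ x : ℤ, 0 ≤ ∑ i ∈ Finset.Icc (-(l : ℤ)) (l : ℤ), p i * (g (x + i) - g x)) ∧
      ∑ i ∈ Finset.Icc (-(l : ℤ)) (l : ℤ), p i * (g (0 + i) - g 0) = 0 := by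
  obtain rfl : g = scale γ := funext fun x => by
    rcases lt_trichotomy x 0 with hx | rfl | hx
    · rw [hg_neg x hx, scale_of_neg hγ hx]
    · rw [hg_zero, scale_zero]
    · rw [hg_pos x hx, scale_of_pos hγ hx]
  have hmean : ∑ i ∈ Icc (-(l : ℤ)) l, p i * scale γ i = 0 := by
    rw [sum_mul_scale_eq hγ, ← hf γ hγ.1, hroot]
  refine ⟨fun x => ?_, by simpa using hmean⟩
  calc (0 : ℝ) = ∑ i ∈ Icc (-(l : ℤ)) l, p i * (γ ^ x * scale γ i) := by
        simp_rw [mul_left_comm (p _), ← mul_sum, hmean, mul_zero]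
    _ ≤ ∑ i ∈ Icc (-(l : ℤ)) l, p i * (scale γ (x + i) - scale γ x) := by
        gcongr with i
        · exact hp_nonneg i
        · linarith [scale_add_le hγ.1 hγ.2.ne x i]

/-- If `γ ∈ (0,1)` is a root of `f`, then for every integer `x` the one-step expected
increment of the scale function `g` along the walk is nonnegative,
`∑_{i=-l}^{l} p(i)·(g(x+i) − g(x)) ≥ 0`, and it equals `0` when `x = 0`. -/
theorem random_walk_scale_increment_nonneg
    (l : ℕ) (hl : 0 < l)
    (p : ℤ → ℝ)
    (hp_nonneg : ∀ i, 0 ≤ p i)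
    (hp_sum : ∑ i ∈ Finset.Icc (-(l : ℤ)) (l : ℤ), p i = 1)
    (hp_supp : ∀ i : ℤ, (l : ℤ) < |i| → p i = 0)
    (f : ℝ → ℝ)
    (hf : ∀ g : ℝ, 0 < g →
      f g = (∑ i ∈ Finset.Icc 1 l, (∑ j ∈ Finset.Icc 1 i, g ^ j) * p (i : ℤ))
          - (∑ i ∈ Finset.Icc 1 l, (∑ j ∈ Finset.Icc 1 i, g ^ (-(j : ℤ))) * p (-(i : ℤ))))
    (γ : ℝ) (hγ : γ ∈ Set.Ioo (0 : ℝ) 1) (hroot : f γ = 0)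
    (g : ℤ → ℝ)
    (hg_pos : ∀ x : ℤ, 0 < x → g x = ∑ i ∈ Finset.Icc 1 x.toNat, γ ^ i)
    (hg_zero : g 0 = 0)
    (hg_neg : ∀ x : ℤ, x < 0 → g x = -∑ i ∈ Finset.Icc 1 (-x).toNat, γ ^ (-(i : ℤ))) :
    (∀ x : ℤ, 0 ≤ ∑ i ∈ Finset.Icc (-(l : ℤ)) (l : ℤ), p i * (g (x + i) - g x)) ∧
      ∑ i ∈ Finset.Icc (-(l : ℤ)) (l : ℤ), p i * (g (0 + i) - g 0) = 0 :=
  random_walk_scale_increment_nonneg_general l p hp_nonneg f hf γ hγ hroot g hg_pos hg_zero hg_neg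
end

section
/- Let H ∈ Matrix (Fin d) (Fin d) ℂ be Hermitian. Then for every matrix A ∈ Matrix (Fin d) (Fin d) ℂ, the Cesàro time average of the Heisenberg evolution of A converges to the pinching of A: the map T ↦ (1/T) ∫_0^T exp(−itH) · A · exp(itH) dt tends, as T → ∞, to 𝒫(A) = ∑_E Π_E A Π_E, where the sum runs over the distinct eigenvalues E of H. (Here exp denotes the matrix exponential.) -/
/-!
Writing `H = ∑ E • P E`, the evolution `exp(-itH) A exp(itH)` is the finite trigonometric sum
`∑_{E,F} e^{i(F-E)t} P E A P F`. The Cesàro mean of `t ↦ e^{iωt}` over `[0, T]` is `1` for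
`ω = 0` and is `O(1 / (|ω| T))` otherwise, so in the limit only the diagonal terms `P E A P E`
survive.
-/

open MeasureTheory Filter Complex Topology

section OrthogonalIdempotents

variable {𝕂 𝔸 ι : Type*} [DecidableEq ι] {s : Finset ι} {P : ι → 𝔸}

theorem sum_smul_mul_sum_smul [CommSemiring 𝕂] [Semiring 𝔸] [Algebra 𝕂 𝔸]
    (hP_orth : ∀ i ∈ s, ∀ j ∈ s, P i * P j = if i = j then P i else 0) (a b : ι → 𝕂) :
    (∑ i ∈ s, a i • P i) * (∑ i ∈ s, b i • P i) = ∑ i ∈ s, (a i * b i) • P i := by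
  rw [Finset.sum_mul_sum]
  refine Finset.sum_congr rfl fun i hi => ?_
  rw [Finset.sum_eq_single_of_mem i hi fun j hj hji => by
    rw [smul_mul_smul_comm, hP_orth i hi j hj, if_neg hji.symm, smul_zero]]
  rw [smul_mul_smul_comm, hP_orth i hi i hi, if_pos rfl]

theorem sum_smul_pow [CommSemiring 𝕂] [Semiring 𝔸] [Algebra 𝕂 𝔸]
    (hP_orth : ∀ i ∈ s, ∀ j ∈ s, P i * P j = if i = j then P i else 0)
    (hP_sum : ∑ i ∈ s, P i = 1) (a : ι → 𝕂) (n : ℕ) :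
    (∑ i ∈ s, a i • P i) ^ n = ∑ i ∈ s, a i ^ n • P i := by
  induction n with
  | zero => simp [hP_sum]
  | succ n ih => simp_rw [pow_succ, ih, sum_smul_mul_sum_smul hP_orth]

theorem exp_sum_smul [RCLike 𝕂] [Ring 𝔸] [Algebra 𝕂 𝔸] [TopologicalSpace 𝔸]
    [IsTopologicalRing 𝔸] [ContinuousSMul 𝕂 𝔸] [T2Space 𝔸]
    (hP_orth : ∀ i ∈ s, ∀ j ∈ s, P i * P j = if i = j then P i else 0)
    (hP_sum : ∑ i ∈ s, P i = 1) (a : ι → 𝕂) :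
    NormedSpace.exp (∑ i ∈ s, a i • P i) = ∑ i ∈ s, NormedSpace.exp (a i) • P i := by
  have hsummable (i : ι) := NormedSpace.expSeries_summable' (𝕂 := 𝕂) (a i)
  simp only [NormedSpace.exp_eq_tsum 𝕂, sum_smul_pow hP_orth hP_sum, Finset.smul_sum,
    ← smul_assoc]
  rw [Summable.tsum_finsetSum fun i _ => (hsummable i).smul_const (P i)]
  exact Finset.sum_congr rfl fun i _ => (hsummable i).tsum_smul_const (P i)

end OrthogonalIdempotents

section SpectralDecomposition

variable {𝔸 : Type*} [Ring 𝔸] [Algebra ℂ 𝔸] [TopologicalSpace 𝔸] [IsTopologicalRing 𝔸]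
  [ContinuousSMul ℂ 𝔸] [T2Space 𝔸] {s : Finset ℝ} {P : ℝ → 𝔸} {H : 𝔸}

theorem exp_smul_eq_sum_smul
    (hP_orth : ∀ E ∈ s, ∀ F ∈ s, P E * P F = if E = F then P E else 0)
    (hP_sum : ∑ E ∈ s, P E = 1) (hH : H = ∑ E ∈ s, (E : ℂ) • P E) (z : ℂ) :
    NormedSpace.exp (z • H) = ∑ E ∈ s, cexp (z * E) • P E := by
  simp_rw [hH, Finset.smul_sum, smul_smul, exp_sum_smul hP_orth hP_sum,
    Complex.exp_eq_exp_ℂ]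

theorem exp_neg_smul_mul_mul_exp_smul_eq_sum
    (hP_orth : ∀ E ∈ s, ∀ F ∈ s, P E * P F = if E = F then P E else 0)
    (hP_sum : ∑ E ∈ s, P E = 1) (hH : H = ∑ E ∈ s, (E : ℂ) • P E) (A : 𝔸) (t : ℝ) :
    NormedSpace.exp ((-(t : ℂ) * I) • H) * A * NormedSpace.exp (((t : ℂ) * I) • H) =
      ∑ E ∈ s, ∑ F ∈ s, cexp ((F - E : ℝ) * t * I) • (P E * A * P F) := by
  simp_rw [exp_smul_eq_sum_smul hP_orth hP_sum hH, Finset.sum_mul, Finset.mul_sum, smul_mul_assoc,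
    mul_smul_comm, smul_smul, ← Complex.exp_add]
  congr! 4
  push_cast
  ring

end SpectralDecomposition

section CesaroMean

variable {V : Type*} [NormedAddCommGroup V] [NormedSpace ℝ V]

noncomputable def cesaroMean (f : ℝ → V) (T : ℝ) : V := (1 / T) • ∫ t in (0 : ℝ)..T, f t

theorem cesaroMean_const [CompleteSpace V] {T : ℝ} (hT : T ≠ 0) (c : V) :
    cesaroMean (fun _ => c) T = c := by
  rw [cesaroMean, intervalIntegral.integral_const, sub_zero, smul_smul, one_div_mul_cancel hT,
    one_smul]

theorem cesaroMean_finsetSum {ι : Type*} (s : Finset ι) {f : ι → ℝ → V}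
    (hf : ∀ i ∈ s, Continuous (f i)) (T : ℝ) :
    cesaroMean (fun t => ∑ i ∈ s, f i t) T = ∑ i ∈ s, cesaroMean (f i) T := by
  rw [cesaroMean,
    intervalIntegral.integral_finsetSum fun i hi => (hf i hi).intervalIntegrable _ _,
    Finset.smul_sum]
  rfl

theorem tendsto_cesaroMean_zero_of_norm_integral_le {f : ℝ → V} {C : ℝ}
    (h : ∀ T, ‖∫ t in (0 : ℝ)..T, f t‖ ≤ C) : Tendsto (cesaroMean f) atTop (𝓝 0) := by
  refine squeeze_zero_norm' ?_ (by simpa using tendsto_inv_atTop_zero.const_mul C)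
  filter_upwards [eventually_gt_atTop 0] with T hT
  rw [cesaroMean, norm_smul, one_div, norm_inv, Real.norm_of_nonneg hT.le, mul_comm]
  exact mul_le_mul_of_nonneg_right (h T) (inv_nonneg.2 hT.le)

theorem norm_integral_exp_mul_I_le {ω : ℝ} (hω : ω ≠ 0) (T : ℝ) :
    ‖∫ t in (0 : ℝ)..T, cexp (ω * t * I)‖ ≤ 2 / |ω| := by
  have hωI : (ω : ℂ) * I ≠ 0 := mul_ne_zero (ofReal_ne_zero.2 hω) I_ne_zero
  simp_rw [mul_right_comm _ _ I]
  rw [integral_exp_mul_complex hωI, norm_div, norm_mul, norm_I, mul_one, norm_real,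
    Real.norm_eq_abs]
  gcongr
  calc ‖cexp (ω * I * T) - cexp (ω * I * (0 : ℝ))‖
      ≤ ‖cexp (ω * I * T)‖ + ‖cexp (ω * I * (0 : ℝ))‖ := norm_sub_le _ _
    _ = 2 := by
      rw [mul_right_comm, ← ofReal_mul, norm_exp_ofReal_mul_I, ofReal_zero, mul_zero, exp_zero,
        norm_one]
      norm_num

theorem tendsto_cesaroMean_exp_mul_I_smul [NormedSpace ℂ V] [CompleteSpace V] (ω : ℝ) (c : V) :
    Tendsto (cesaroMean fun t => cexp (ω * t * I) • c) atTop (𝓝 (if ω = 0 then c else 0)) := by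
  split_ifs with hω
  · refine tendsto_const_nhds.congr' ?_
    filter_upwards [eventually_ne_atTop 0] with T hT
    simp [hω, cesaroMean_const hT]
  · refine tendsto_cesaroMean_zero_of_norm_integral_le (C := 2 / |ω| * ‖c‖) fun T => ?_
    rw [intervalIntegral.integral_smul_const, norm_smul]
    gcongr
    exact norm_integral_exp_mul_I_le hω T

end CesaroMean

attribute [local instance] Matrix.frobeniusNormedAddCommGroup Matrix.frobeniusNormedSpace

theorem pinching_as_cesaro_time_average_general
    (d : ℕ)
    (H : Matrix (Fin d) (Fin d) ℂ)
    (Spec : Finset ℝ) (P : ℝ → Matrix (Fin d) (Fin d) ℂ)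
    (hP_orth : ∀ E ∈ Spec, ∀ F ∈ Spec, P E * P F = if E = F then P E else 0)
    (hP_sum : ∑ E ∈ Spec, P E = 1)
    (hspec : H = ∑ E ∈ Spec, (E : ℂ) • P E)
    (A : Matrix (Fin d) (Fin d) ℂ) :
    Tendsto
      (fun T : ℝ => (1 / T) • ∫ t in (0:ℝ)..T,
        NormedSpace.exp ((-(t : ℂ) * Complex.I) • H) * A *
          NormedSpace.exp (((t : ℂ) * Complex.I) • H))
      atTop (nhds (∑ E ∈ Spec, P E * A * P E)) := by
  have hcont (E F : ℝ) :
      Continuous fun t : ℝ => cexp ((F - E : ℝ) * t * I) • (P E * A * P F) := by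
    fun_prop
  have hpinch : ∑ E ∈ Spec, P E * A * P E =
      ∑ E ∈ Spec, ∑ F ∈ Spec, if F - E = 0 then P E * A * P F else 0 := by
    refine Finset.sum_congr rfl fun E hE => ?_
    simp [sub_eq_zero, hE]
  rw [hpinch]
  refine (tendsto_finsetSum _ fun E _ => tendsto_finsetSum _ fun F _ =>
    tendsto_cesaroMean_exp_mul_I_smul (F - E) (P E * A * P F)).congr fun T => ?_
  simp_rw [exp_neg_smul_mul_mul_exp_smul_eq_sum hP_orth hP_sum hspec]
  rw [← cesaroMean,
    cesaroMean_finsetSum _ fun E _ => continuous_finsetSum _ fun F _ => hcont E F]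
  exact Finset.sum_congr rfl fun E _ => (cesaroMean_finsetSum _ (fun F _ => hcont E F) T).symm

/-- **The pinching channel as a Cesàro time average (Eq. (13) of the paper).**
Let `H` be a Hermitian matrix with spectral decomposition `H = ∑_{E ∈ Spec} E • P E`, where
the `P E` are the (nonzero, pairwise orthogonal, complete) eigenprojections onto the
eigenspaces of the distinct eigenvalues `E`.  Then for every matrix `A`, the Cesàro time
average `T ↦ (1/T) ∫_0^T exp(−itH) A exp(itH) dt` of the Heisenberg evolution of `A`
converges, as `T → ∞`, to the pinching `𝒫(A) = ∑_{E ∈ Spec} P E * A * P E`. -/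
theorem pinching_as_cesaro_time_average
    (d : ℕ) (hd : 0 < d)
    (H : Matrix (Fin d) (Fin d) ℂ) (hH : H.IsHermitian)
    (Spec : Finset ℝ) (P : ℝ → Matrix (Fin d) (Fin d) ℂ)
    (hP_herm : ∀ E ∈ Spec, (P E).IsHermitian)
    (hP_orth : ∀ E ∈ Spec, ∀ F ∈ Spec, P E * P F = if E = F then P E else 0)
    (hP_sum : ∑ E ∈ Spec, P E = 1)
    (hP_ne : ∀ E ∈ Spec, P E ≠ 0)
    (hspec : H = ∑ E ∈ Spec, (E : ℂ) • P E)
    (A : Matrix (Fin d) (Fin d) ℂ) :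
    Tendsto
      (fun T : ℝ => (1 / T) • ∫ t in (0:ℝ)..T,
        NormedSpace.exp ((-(t : ℂ) * Complex.I) • H) * A *
          NormedSpace.exp (((t : ℂ) * Complex.I) • H))
      atTop (nhds (∑ E ∈ Spec, P E * A * P E)) :=
  pinching_as_cesaro_time_average_general d H Spec P hP_orth hP_sum hspec A
end

section
/- Let H ∈ Matrix (Fin d) (Fin d) ℂ be Hermitian, β > 0, and ρ a density matrix. Then: (i) the pinched state 𝒫(ρ) is again a density matrix; (ii) the energy is preserved, Re Tr(𝒫(ρ)·H) = Re Tr(ρ·H); (iii) the von Neumann entropy does not decrease, S(𝒫(ρ)) ≥ S(ρ); and consequently (iv) the nonequilibrium free energy does not increase under pinching, F(𝒫(ρ)) ≤ F(ρ). -/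
open Matrix
open scoped ComplexOrder

/-- The von Neumann entropy `S(ρ) = −∑ᵢ λᵢ log λᵢ` of a Hermitian matrix `ρ`, where the `λᵢ`
are its eigenvalues counted with multiplicity (`0·log 0 = 0` since `Real.log 0 = 0`). -/
noncomputable def vnEntropy {d : ℕ} {ρ : Matrix (Fin d) (Fin d) ℂ}
    (hρ : ρ.IsHermitian) : ℝ :=
  -∑ i, hρ.eigenvalues i * Real.log (hρ.eigenvalues i)

/-- The nonequilibrium free energy `F(ρ) = Re Tr(ρH) − S(ρ)/β` at inverse temperature `β`. -/
noncomputable def freeEnergy {d : ℕ} (β : ℝ) (H : Matrix (Fin d) (Fin d) ℂ)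
    {ρ : Matrix (Fin d) (Fin d) ℂ} (hρ : ρ.IsHermitian) : ℝ :=
  (ρ * H).trace.re - vnEntropy hρ / β

/-!
The pinching `𝒫(A) = ∑ P_E A P_E` is self-adjoint for the trace pairing,
`Tr(𝒫(A) X) = Tr(A 𝒫(X))`, and by orthogonality of the `P_E` it fixes `1` and `H`; this gives
preservation of trace and energy. For the entropy, `𝒫` is a unital, trace-preserving Kraus map:
if `V` and `U` diagonalize `ρ` and `𝒫(ρ)`, the eigenvalues of `𝒫(ρ)` are `B λ(ρ)` with
`B_{ji} = ∑_E |(U* P_E V)_{ji}|²`, a doubly stochastic matrix, so Jensen's inequality for the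
convex function `x log x` yields `S(𝒫(ρ)) ≥ S(ρ)`. Since the energy is unchanged, the free
energy decreases.
-/

open Finset

namespace Matrix

variable {n ι : Type*}

section Pinching

variable [Fintype n] {R : Type*}

def pinching [Semiring R] (s : Finset ι) (P : ι → Matrix n n R) (A : Matrix n n R) :
    Matrix n n R :=
  ∑ E ∈ s, P E * A * P E

theorem trace_pinching_mul [CommSemiring R] (s : Finset ι) (P : ι → Matrix n n R)
    (A X : Matrix n n R) : (pinching s P A * X).trace = (A * pinching s P X).trace := by
  simp only [pinching, Finset.sum_mul, Finset.mul_sum, trace_sum]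
  refine sum_congr rfl fun E _ => ?_
  rw [Matrix.mul_assoc, Matrix.mul_assoc, trace_mul_comm]
  simp only [Matrix.mul_assoc]

variable [CommSemiring R] [DecidableEq ι] {s : Finset ι} {P : ι → Matrix n n R}

theorem pinching_eq_self_of_eq_sum_smul
    (hP : ∀ E ∈ s, ∀ F ∈ s, P E * P F = if E = F then P E else 0)
    {c : ι → R} {H : Matrix n n R} (hH : H = ∑ E ∈ s, c E • P E) :
    pinching s P H = H := by
  have hPH : ∀ E ∈ s, P E * H = c E • P E := fun E hE => by
    rw [hH, Finset.mul_sum, sum_eq_single_of_mem E hE]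
    · rw [Matrix.mul_smul, hP E hE E hE, if_pos rfl]
    · intro F hF hFE
      rw [Matrix.mul_smul, hP E hE F hF, if_neg (Ne.symm hFE), smul_zero]
  conv_rhs => rw [hH]
  refine sum_congr rfl fun E hE => ?_
  rw [hPH E hE, Matrix.smul_mul, hP E hE E hE, if_pos rfl]

theorem pinching_one [DecidableEq n]
    (hP : ∀ E ∈ s, ∀ F ∈ s, P E * P F = if E = F then P E else 0)
    (hP_sum : ∑ E ∈ s, P E = 1) : pinching s P 1 = 1 :=
  pinching_eq_self_of_eq_sum_smul hP (c := 1) (by simp only [Pi.one_apply, one_smul, hP_sum])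

theorem trace_pinching [DecidableEq n]
    (hP : ∀ E ∈ s, ∀ F ∈ s, P E * P F = if E = F then P E else 0)
    (hP_sum : ∑ E ∈ s, P E = 1) (A : Matrix n n R) : (pinching s P A).trace = A.trace := by
  simpa only [pinching_one hP hP_sum, Matrix.mul_one] using trace_pinching_mul s P A 1

end Pinching

theorem PosSemidef.pinching [Fintype n] {R : Type*} [Ring R] [PartialOrder R] [StarRing R]
    [AddLeftMono R] {A : Matrix n n R} (hA : A.PosSemidef) {s : Finset ι} {P : ι → Matrix n n R}
    (hP : ∀ E ∈ s, (P E).IsHermitian) : (Matrix.pinching s P A).PosSemidef :=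
  posSemidef_sum s fun E hE => by
    simpa only [(hP E hE).eq] using hA.mul_mul_conjTranspose_same (P E)

section Kraus

variable {m 𝕜 : Type*} [RCLike 𝕜]

theorem mul_conjTranspose_apply_self [Fintype n] (A : Matrix m n 𝕜) (j : m) :
    (A * Aᴴ) j j = ∑ i, ((‖A j i‖ ^ 2 : ℝ) : 𝕜) := by
  simp only [mul_apply, conjTranspose_apply, RCLike.star_def, RCLike.mul_conj, RCLike.ofReal_pow]

theorem conjTranspose_mul_apply_self [Fintype m] (A : Matrix m n 𝕜) (i : n) :
    (Aᴴ * A) i i = ∑ j, ((‖A j i‖ ^ 2 : ℝ) : 𝕜) := by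
  simp only [mul_apply, conjTranspose_apply, RCLike.star_def, RCLike.conj_mul, RCLike.ofReal_pow]

def krausWeights (s : Finset ι) (A : ι → Matrix m n 𝕜) : Matrix m n ℝ :=
  of fun j i => ∑ E ∈ s, ‖A E j i‖ ^ 2

theorem krausWeights_mem_doublyStochastic [Fintype n] [DecidableEq n] {s : Finset ι}
    {A : ι → Matrix n n 𝕜} (h₁ : ∑ E ∈ s, A E * (A E)ᴴ = 1)
    (h₂ : ∑ E ∈ s, (A E)ᴴ * A E = 1) : krausWeights s A ∈ doublyStochastic ℝ n := by
  refine mem_doublyStochastic_iff_sum.2 ⟨fun j i => sum_nonneg fun E _ => by positivity,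
    fun j => ?_, fun i => ?_⟩
  · apply RCLike.ofReal_injective (K := 𝕜)
    simp only [krausWeights, of_apply, RCLike.ofReal_sum, RCLike.ofReal_one]
    rw [sum_comm]
    simp only [← mul_conjTranspose_apply_self, ← sum_apply, h₁, one_apply_eq]
  · apply RCLike.ofReal_injective (K := 𝕜)
    simp only [krausWeights, of_apply, RCLike.ofReal_sum, RCLike.ofReal_one]
    rw [sum_comm]
    simp only [← conjTranspose_mul_apply_self, ← sum_apply, h₂, one_apply_eq]

theorem sum_mul_diagonal_mul_conjTranspose_apply_self [Fintype n] [DecidableEq n]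
    (s : Finset ι) (A : ι → Matrix n n 𝕜) (x : n → ℝ) (j : n) :
    (∑ E ∈ s, A E * diagonal (RCLike.ofReal ∘ x) * (A E)ᴴ : Matrix n n 𝕜) j j =
      ((krausWeights s A *ᵥ x) j : 𝕜) := by
  simp only [sum_apply, krausWeights, mulVec, dotProduct, of_apply, sum_mul, RCLike.ofReal_sum]
  rw [sum_comm]
  refine sum_congr rfl fun E _ => ?_
  rw [mul_apply]
  refine sum_congr rfl fun i _ => ?_
  rw [mul_diagonal, conjTranspose_apply, Function.comp_apply, mul_right_comm, RCLike.star_def,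
    RCLike.mul_conj, RCLike.ofReal_mul, RCLike.ofReal_pow]

theorem IsHermitian.exists_eigenvalues_eq_mulVec_of_unital [Fintype n] [DecidableEq n]
    {ρ σ : Matrix n n 𝕜} (hρ : ρ.IsHermitian) (hσ : σ.IsHermitian) {s : Finset ι}
    {K : ι → Matrix n n 𝕜}
    (hK₁ : ∑ E ∈ s, K E * (K E)ᴴ = 1) (hK₂ : ∑ E ∈ s, (K E)ᴴ * K E = 1)
    (hσK : σ = ∑ E ∈ s, K E * ρ * (K E)ᴴ) :
    ∃ B ∈ doublyStochastic ℝ n, hσ.eigenvalues = B *ᵥ hρ.eigenvalues := by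
  set U : Matrix n n 𝕜 := ↑hσ.eigenvectorUnitary
  set V : Matrix n n 𝕜 := ↑hρ.eigenvectorUnitary
  have hU : Uᴴ * U = 1 ∧ U * Uᴴ = 1 := Unitary.mem_iff.1 hσ.eigenvectorUnitary.2
  have hV : Vᴴ * V = 1 ∧ V * Vᴴ = 1 := Unitary.mem_iff.1 hρ.eigenvectorUnitary.2
  have hUU (X : Matrix n n 𝕜) : U * (Uᴴ * X) = X := by
    rw [← Matrix.mul_assoc, hU.2, Matrix.one_mul]
  have hVV (X : Matrix n n 𝕜) : V * (Vᴴ * X) = X := by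
    rw [← Matrix.mul_assoc, hV.2, Matrix.one_mul]
  set A : ι → Matrix n n 𝕜 := fun E => Uᴴ * K E * V
  have hA :
      Uᴴ * σ * U = ∑ E ∈ s, A E * diagonal (RCLike.ofReal ∘ hρ.eigenvalues) * (A E)ᴴ := by
    conv_lhs => rw [hσK, hρ.spectral_theorem]
    simp only [A, Unitary.conjStarAlgAut_apply, star_eq_conjTranspose,
      conjTranspose_mul, conjTranspose_conjTranspose, Finset.mul_sum, Finset.sum_mul,
      Matrix.mul_assoc]
    rfl
  refine ⟨krausWeights s A, krausWeights_mem_doublyStochastic ?_ ?_, funext fun j => ?_⟩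
  · calc ∑ E ∈ s, A E * (A E)ᴴ = Uᴴ * (∑ E ∈ s, K E * (K E)ᴴ) * U := by
          simp only [A, conjTranspose_mul, conjTranspose_conjTranspose, Finset.mul_sum,
            Finset.sum_mul, Matrix.mul_assoc, hVV]
      _ = 1 := by rw [hK₁, Matrix.mul_one, hU.1]
  · calc ∑ E ∈ s, (A E)ᴴ * A E = Vᴴ * (∑ E ∈ s, (K E)ᴴ * K E) * V := by
          simp only [A, conjTranspose_mul, conjTranspose_conjTranspose, Finset.mul_sum,
            Finset.sum_mul, Matrix.mul_assoc, hUU]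
      _ = 1 := by rw [hK₂, Matrix.mul_one, hV.1]
  · apply RCLike.ofReal_injective (K := 𝕜)
    have hdiag := hσ.conjStarAlgAut_star_eigenvectorUnitary
    rw [Unitary.conjStarAlgAut_star_apply, star_eq_conjTranspose, hA] at hdiag
    rw [← sum_mul_diagonal_mul_conjTranspose_apply_self, hdiag, diagonal_apply_eq,
      Function.comp_apply]

end Kraus

end Matrix

theorem ConvexOn.sum_comp_mulVec_le {n : Type*} [Fintype n] [DecidableEq n] {s : Set ℝ}
    {f : ℝ → ℝ} (hf : ConvexOn ℝ s f) {B : Matrix n n ℝ} (hB : B ∈ doublyStochastic ℝ n)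
    {x : n → ℝ} (hx : ∀ i, x i ∈ s) : ∑ j, f ((B *ᵥ x) j) ≤ ∑ i, f (x i) := by
  obtain ⟨hB_nonneg, hB_row, hB_col⟩ := mem_doublyStochastic_iff_sum.1 hB
  calc ∑ j, f ((B *ᵥ x) j) ≤ ∑ j, ∑ i, B j i * f (x i) := sum_le_sum fun j _ => by
        simpa only [Matrix.mulVec, dotProduct, smul_eq_mul] using
          hf.map_sum_le (fun i _ => hB_nonneg j i) (hB_row j) fun i _ => hx i
    _ = ∑ i, f (x i) := by
        rw [sum_comm]
        simp only [← sum_mul, hB_col, one_mul]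

theorem vnEntropy_le_of_eigenvalues_eq_mulVec {d : ℕ} {ρ σ : Matrix (Fin d) (Fin d) ℂ}
    (hρ : ρ.PosSemidef) (hσ : σ.IsHermitian) {B : Matrix (Fin d) (Fin d) ℝ}
    (hB : B ∈ doublyStochastic ℝ (Fin d)) (h : hσ.eigenvalues = B *ᵥ hρ.1.eigenvalues) :
    vnEntropy hρ.1 ≤ vnEntropy hσ := by
  rw [vnEntropy, vnEntropy, h, neg_le_neg_iff]
  exact Real.convexOn_mul_log.sum_comp_mulVec_le hB hρ.eigenvalues_nonneg

theorem vnEntropy_le_pinching {d : ℕ} {ι : Type*} [DecidableEq ι] {s : Finset ι}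
    {P : ι → Matrix (Fin d) (Fin d) ℂ} (hP_herm : ∀ E ∈ s, (P E).IsHermitian)
    (hP_orth : ∀ E ∈ s, ∀ F ∈ s, P E * P F = if E = F then P E else 0)
    (hP_sum : ∑ E ∈ s, P E = 1) {ρ : Matrix (Fin d) (Fin d) ℂ} (hρ : ρ.PosSemidef)
    (hσ : (pinching s P ρ).IsHermitian) : vnEntropy hρ.1 ≤ vnEntropy hσ := by
  have hunital : ∑ E ∈ s, P E * (P E)ᴴ = 1 := by
    rw [← pinching_one hP_orth hP_sum]
    exact sum_congr rfl fun E hE => by rw [(hP_herm E hE).eq, Matrix.mul_one]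
  have hunital' : ∑ E ∈ s, (P E)ᴴ * P E = 1 := by
    rw [← hunital]
    exact sum_congr rfl fun E hE => by rw [(hP_herm E hE).eq]
  obtain ⟨B, hB, h⟩ := hρ.1.exists_eigenvalues_eq_mulVec_of_unital hσ hunital hunital'
    (sum_congr rfl fun E hE => by rw [(hP_herm E hE).eq])
  exact vnEntropy_le_of_eigenvalues_eq_mulVec hρ hσ hB h

theorem freeEnergy_le_of_energy_eq_of_vnEntropy_le {d : ℕ} {β : ℝ} (hβ : 0 ≤ β)
    {H ρ σ : Matrix (Fin d) (Fin d) ℂ} (hρ : ρ.IsHermitian) (hσ : σ.IsHermitian)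
    (hE : (σ * H).trace.re = (ρ * H).trace.re) (hS : vnEntropy hρ ≤ vnEntropy hσ) :
    freeEnergy β H hσ ≤ freeEnergy β H hρ := by
  rw [freeEnergy, freeEnergy, hE]
  gcongr

theorem pinching_density_energy_entropy_freeEnergy_general
    (d : ℕ)
    (H : Matrix (Fin d) (Fin d) ℂ)
    (β : ℝ) (hβ : 0 < β)
    (Spec : Finset ℝ) (P : ℝ → Matrix (Fin d) (Fin d) ℂ)
    (hP_herm : ∀ E ∈ Spec, (P E).IsHermitian)
    (hP_orth : ∀ E ∈ Spec, ∀ F ∈ Spec, P E * P F = if E = F then P E else 0)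
    (hP_sum : ∑ E ∈ Spec, P E = 1)
    (hspec : H = ∑ E ∈ Spec, (E : ℂ) • P E)
    (ρ : Matrix (Fin d) (Fin d) ℂ)
    (hρ : ρ.PosSemidef) (hρtr : ρ.trace = 1) :
    ∃ hpinch : (∑ E ∈ Spec, P E * ρ * P E).PosSemidef,
      (∑ E ∈ Spec, P E * ρ * P E).trace = 1 ∧
      ((∑ E ∈ Spec, P E * ρ * P E) * H).trace.re = (ρ * H).trace.re ∧
      vnEntropy hρ.1 ≤ vnEntropy hpinch.1 ∧
      freeEnergy β H hpinch.1 ≤ freeEnergy β H hρ.1 := by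
  have hσ : (pinching Spec P ρ).PosSemidef := hρ.pinching hP_herm
  have henergy : ((pinching Spec P ρ) * H).trace = (ρ * H).trace := by
    rw [trace_pinching_mul, pinching_eq_self_of_eq_sum_smul hP_orth hspec]
  have hentropy : vnEntropy hρ.1 ≤ vnEntropy hσ.1 :=
    vnEntropy_le_pinching hP_herm hP_orth hP_sum hρ hσ.1
  refine ⟨hσ, ?_, congrArg Complex.re henergy, hentropy, ?_⟩
  · exact (trace_pinching hP_orth hP_sum ρ).trans hρtr
  · exact freeEnergy_le_of_energy_eq_of_vnEntropy_le hβ.le hρ.1 hσ.1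
      (congrArg Complex.re henergy) hentropy

/-- **Pinching preserves density matrices and energy, increases entropy, decreases free
energy.**  Let `H = ∑_{E ∈ Spec} E • P E` be the spectral decomposition of the Hermitian
matrix `H` into nonzero, pairwise orthogonal, complete eigenprojections, and let
`𝒫(ρ) = ∑_{E ∈ Spec} P E * ρ * P E` be the associated pinching channel.  Then for any
density matrix `ρ` and `β > 0`: (i) `𝒫(ρ)` is a density matrix; (ii) the energy is
preserved, `Re Tr(𝒫(ρ)H) = Re Tr(ρH)`; (iii) `S(𝒫(ρ)) ≥ S(ρ)`; and (iv) the
nonequilibrium free energy does not increase, `F(𝒫(ρ)) ≤ F(ρ)`. -/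
theorem pinching_density_energy_entropy_freeEnergy
    (d : ℕ) (hd : 0 < d)
    (H : Matrix (Fin d) (Fin d) ℂ) (hH : H.IsHermitian)
    (β : ℝ) (hβ : 0 < β)
    (Spec : Finset ℝ) (P : ℝ → Matrix (Fin d) (Fin d) ℂ)
    (hP_herm : ∀ E ∈ Spec, (P E).IsHermitian)
    (hP_orth : ∀ E ∈ Spec, ∀ F ∈ Spec, P E * P F = if E = F then P E else 0)
    (hP_sum : ∑ E ∈ Spec, P E = 1)
    (hP_ne : ∀ E ∈ Spec, P E ≠ 0)
    (hspec : H = ∑ E ∈ Spec, (E : ℂ) • P E)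
    (ρ : Matrix (Fin d) (Fin d) ℂ)
    (hρ : ρ.PosSemidef) (hρtr : ρ.trace = 1) :
    ∃ hpinch : (∑ E ∈ Spec, P E * ρ * P E).PosSemidef,
      (∑ E ∈ Spec, P E * ρ * P E).trace = 1 ∧
      ((∑ E ∈ Spec, P E * ρ * P E) * H).trace.re = (ρ * H).trace.re ∧
      vnEntropy hρ.1 ≤ vnEntropy hpinch.1 ∧
      freeEnergy β H hpinch.1 ≤ freeEnergy β H hρ.1 :=
  pinching_density_energy_entropy_freeEnergy_general d H β hβ Spec P hP_herm hP_orth hP_sum hspec ρ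
    hρ hρtr
end
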